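/- arXiv:2311.07061 — 5 statements merged into one kernel-verified Lean document; each statement's English description precedes it below -/
import Mathlib

section
/- Let G be a finite nilpotent group and suppose |G| = m_1 · m_2 · ⋯ · m_k, where k ≥ 3 and each m_i is an integer greater than 1. Then there exist subsets A_1, …, A_k of G that form a complete factorization of G with |A_i| = m_i for all i = 1, …, k. -/
/-!
A finite nilpotent group has a normal subgroup of every order dividing its order (split off a
central element of prime order and pass to the quotient), so there is a chain of normal subgroups
`G = N₀ ≥ N₁ ≥ ⋯ ≥ N_k = 1` with `|N_i| = m_i |N_{i+1}|`. Let `T_i ∋ 1` be a left transversal of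
`N_{i+1}` in `N_i`. For any translating elements `c_i`, every `g ∈ G` is uniquely a product of
elements of `c_0 T_0, …, c_{k-1} T_{k-1}`: modulo the normal subgroup `N_1` the later factors only
contribute `c_1 ⋯ c_{k-1}`, which pins down the first factor, and one recurses.

Taking `c_0 = 1` and `c_j ∈ N_{j-1} \ N_j` gives `c_j T_j ⊆ N_{j-1} \ N_j`, so the sets with
`j ≥ 1` are pairwise disjoint, and they avoid `T_0 ∩ N_1 = {1}`. The last possible collision,
between `T_0` and `c_1 T_1`, is ruled out by choosing `c_1 = r n⁻¹` with `r ∈ T_0 \ N_1` and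
`1 ≠ n ∈ N_2`; such an `n` exists because `k ≥ 3`.
-/

/-- Subsets `A 0, …, A (k-1)` of a group `G` form a complete factorization of `G` if they are
pairwise disjoint and every element `g ∈ G` is uniquely represented as
`g = a_0 * a_1 * ⋯ * a_(k-1)` with `a_i ∈ A i` for each `i`. -/
def IsCompleteFactorization {G : Type*} [Group G] {k : ℕ} (A : Fin k → Set G) : Prop :=
  (∀ i j : Fin k, i ≠ j → Disjoint (A i) (A j)) ∧
  ∀ g : G, ∃! f : Fin k → G, (∀ i, f i ∈ A i) ∧ (List.ofFn f).prod = g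

open Subgroup Function
open scoped Pointwise

section Nilpotent

variable {G : Type*} [Group G]

theorem Subgroup.normal_zpowers_of_mem_center {x : G} (hx : x ∈ center G) : (zpowers x).Normal :=
  ⟨fun y hy g => by
    rwa [mem_center_iff.mp (zpowers_le.mpr hx hy) g, mul_inv_cancel_right]⟩

theorem Subgroup.inf_center_ne_bot [Group.IsNilpotent G] (N : Subgroup G) [hN : N.Normal]
    (hN₀ : N ≠ ⊥) : N ⊓ center G ≠ ⊥ := by
  -- the first term of the upper central series meeting `N` nontrivially meets it centrally
  suffices ∀ i, N ⊓ upperCentralSeries G i ≠ ⊥ → N ⊓ center G ≠ ⊥ by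
    obtain ⟨n, hn⟩ := Group.IsNilpotent.nilpotent G
    exact this n (by rwa [hn, inf_top_eq])
  intro i
  induction i with
  | zero => simp [upperCentralSeries_zero]
  | succ i ih =>
    intro hi
    by_cases h : N ⊓ upperCentralSeries G i = ⊥
    · refine ne_bot_of_le_ne_bot hi fun x ⟨hxN, hxζ⟩ => ⟨hxN, mem_center_iff.mpr fun y => ?_⟩
      have hxy : x * y * x⁻¹ * y⁻¹ ∈ N ⊓ upperCentralSeries G i := mem_inf.mpr
        ⟨by simpa only [mul_assoc] using N.mul_mem hxN (hN.conj_mem _ (N.inv_mem hxN) y),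
          mem_upperCentralSeries_succ_iff.mp hxζ y⟩
      rw [h, mem_bot, ← commutatorElement_def, commutatorElement_eq_one_iff_mul_comm] at hxy
      exact hxy.symm
    · exact ih h

theorem exists_mem_center_orderOf_eq [Finite G] [Group.IsNilpotent G] {p : ℕ} [Fact p.Prime]
    (hp : p ∣ Nat.card G) : ∃ x ∈ center G, orderOf x = p := by
  obtain ⟨P⟩ : Nonempty (Sylow p G) := inferInstance
  have hPZ := (P : Subgroup G).inf_center_ne_bot (P.ne_bot_of_dvd_card hp)
  have hpZ : p ∣ Nat.card ((P : Subgroup G) ⊓ center G : Subgroup G) :=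
    P.isPGroup'.to_inf_left.card_eq_or_dvd.resolve_left (hPZ ∘ card_eq_one.mp)
  obtain ⟨x, hx⟩ := exists_prime_orderOf_dvd_card' p hpZ
  exact ⟨x, x.2.2, by rw [orderOf_coe, hx]⟩

theorem Subgroup.exists_normal_le_card_eq [Finite G] [Group.IsNilpotent G] (M : Subgroup G)
    [M.Normal] {d : ℕ} (hMd : Nat.card M ∣ d) (hd : d ∣ Nat.card G) :
    ∃ N : Subgroup G, N.Normal ∧ M ≤ N ∧ Nat.card N = d := by
  obtain ⟨n, rfl⟩ := hMd
  induction n using Nat.strong_induction_on generalizing M with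
  | _ n ih =>
  rcases eq_or_ne n 1 with rfl | hn₁
  · exact ⟨M, ‹_›, le_rfl, (mul_one _).symm⟩
  have hn₀ : 0 < n := Nat.pos_of_ne_zero <| by
    rintro rfl
    exact Nat.card_pos.ne' (Nat.eq_zero_of_zero_dvd (by simpa using hd))
  have hp := Nat.minFac_prime hn₁
  have := Fact.mk hp
  have hn : n = n.minFac * (n / n.minFac) := (Nat.mul_div_cancel' (Nat.minFac_dvd n)).symm
  have hnQ : n ∣ Nat.card (G ⧸ M) := by
    rw [card_eq_card_quotient_mul_card_subgroup M, mul_comm (Nat.card (G ⧸ M))] at hd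
    exact Nat.dvd_of_mul_dvd_mul_left Nat.card_pos hd
  obtain ⟨x, hxZ, hxp⟩ := exists_mem_center_orderOf_eq ((Nat.minFac_dvd n).trans hnQ)
  have := normal_zpowers_of_mem_center hxZ
  let M' := (zpowers x).comap (QuotientGroup.mk' M)
  have hM' : Nat.card M' = Nat.card M * n.minFac := by
    rw [← hxp, ← Nat.card_zpowers]
    exact QuotientGroup.card_preimage_mk M (zpowers x)
  have hMM' : M ≤ M' := fun y hy => by
    simp [M', (QuotientGroup.eq_one_iff y).mpr hy]
  obtain ⟨N, hN, hM'N, hNcard⟩ := ih _ (Nat.div_lt_self hn₀ hp.one_lt) M'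
    (by rwa [hM', mul_assoc, ← hn])
  exact ⟨N, hN, hMM'.trans hM'N, by rw [hNcard, hM', mul_assoc, ← hn]⟩

theorem exists_normal_antitone_card_eq_prod_drop [Finite G] [Group.IsNilpotent G] (L : List ℕ)
    (hL : L.prod ∣ Nat.card G) :
    ∃ N : ℕ → Subgroup G, (∀ i, (N i).Normal) ∧ Antitone N ∧
      ∀ i, Nat.card (N i) = (L.drop i).prod := by
  induction L with
  | nil => exact ⟨fun _ => ⊥, fun _ => inferInstance, antitone_const, by simp⟩
  | cons a L ih =>
    rw [List.prod_cons] at hL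
    obtain ⟨N, hN, hanti, hcard⟩ := ih (dvd_of_mul_left_dvd hL)
    have := hN 0
    obtain ⟨N₀, hN₀, hle, hN₀card⟩ := (N 0).exists_normal_le_card_eq
      (by rw [hcard 0, List.drop_zero]; exact dvd_mul_left _ _) hL
    refine ⟨fun | 0 => N₀ | i + 1 => N i, fun | 0 => hN₀ | i + 1 => hN i,
      antitone_nat_of_succ_le fun | 0 => hle | i + 1 => hanti i.le_succ,
      fun | 0 => by simpa using hN₀card | i + 1 => hcard i⟩

theorem exists_normal_chain_card_eq_mul [Finite G] [Group.IsNilpotent G] {k : ℕ}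
    (m : Fin k → ℕ) (hm : Nat.card G = ∏ i, m i) :
    ∃ N : ℕ → Subgroup G, (∀ i, (N i).Normal) ∧ Antitone N ∧ N 0 = ⊤ ∧ N k = ⊥ ∧
      ∀ i : Fin k, Nat.card (N i) = m i * Nat.card (N (i + 1)) := by
  obtain ⟨N, hN, hanti, hcard⟩ :=
    exists_normal_antitone_card_eq_prod_drop (G := G) (List.ofFn m) (by rw [List.prod_ofFn, hm])
  refine ⟨N, hN, hanti, eq_top_of_card_eq _ ?_, card_eq_one.mp ?_, fun i => ?_⟩
  · rw [hcard, List.drop_zero, List.prod_ofFn, hm]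
  · rw [hcard, List.drop_of_length_le (by simp), List.prod_nil]
  · rw [hcard, hcard, List.drop_eq_getElem_cons (by simp), List.prod_cons, List.getElem_ofFn]

end Nilpotent

section Transversal

variable {G : Type*} [Group G]

def IsLeftTransversalIn (H K : Subgroup G) (T : Set G) : Prop :=
  T ⊆ K ∧ ∀ x ∈ K, ∃! t, t ∈ T ∧ t⁻¹ * x ∈ H

namespace IsLeftTransversalIn

variable {H K : Subgroup G} {T : Set G}

theorem eq_of_inv_mul_mem (hT : IsLeftTransversalIn H K T) {s t : G} (hs : s ∈ T) (ht : t ∈ T)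
    (h : s⁻¹ * t ∈ H) : s = t :=
  (hT.2 t (hT.1 ht)).unique ⟨hs, h⟩ ⟨ht, by simp⟩

theorem ncard_mul_card (hT : IsLeftTransversalIn H K T) (hHK : H ≤ K) :
    T.ncard * Nat.card H = Nat.card K := by
  let f : T × H → K := fun p => ⟨p.1 * p.2, K.mul_mem (hT.1 p.1.2) (hHK p.2.2)⟩
  have hf : Function.Bijective f := by
    refine ⟨fun ⟨⟨t, ht⟩, ⟨h, hh⟩⟩ ⟨⟨t', ht'⟩, ⟨h', hh'⟩⟩ heq => ?_, fun ⟨x, hx⟩ => ?_⟩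
    · have htt' : t = t' := hT.eq_of_inv_mul_mem ht ht' <| by
        have : t * h = t' * h' := congrArg Subtype.val heq
        rw [show t⁻¹ * t' = h * h'⁻¹ by rw [eq_mul_inv_iff_mul_eq, mul_assoc, ← this,
          inv_mul_cancel_left]]
        exact H.mul_mem hh (H.inv_mem hh')
      subst htt'
      have : h = h' := mul_left_cancel (congrArg Subtype.val heq)
      subst this
      rfl
    · obtain ⟨t, ⟨ht, htx⟩, -⟩ := hT.2 x hx
      exact ⟨⟨⟨t, ht⟩, ⟨t⁻¹ * x, htx⟩⟩, Subtype.ext (mul_inv_cancel_left t x)⟩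
  rw [← Nat.card_coe_set_eq, ← Nat.card_prod, Nat.card_congr (Equiv.ofBijective f hf)]

end IsLeftTransversalIn

theorem exists_isLeftTransversalIn_one_mem {H K : Subgroup G} (hHK : H ≤ K) :
    ∃ T, IsLeftTransversalIn H K T ∧ (1 : G) ∈ T := by
  obtain ⟨S, hS, hS₁⟩ := exists_isComplement_left H 1
  have hS' := isComplement_iff_existsUnique_inv_mul_mem.mp hS
  refine ⟨S ∩ K, ⟨Set.inter_subset_right, fun x hx => ?_⟩, hS₁, K.one_mem⟩
  obtain ⟨⟨s, hs⟩, hsx, hsuniq⟩ := hS' x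
  have hsK : s ∈ K := by
    simpa using K.mul_mem hx (K.inv_mem (hHK hsx))
  exact ⟨s, ⟨⟨hs, hsK⟩, hsx⟩, fun t ⟨⟨htS, _⟩, htx⟩ =>
    congrArg Subtype.val (hsuniq ⟨t, htS⟩ htx)⟩

end Transversal

section Factorization

variable {G : Type*} [Group G]

theorem Subgroup.mem_iff_of_mem_smul {K : Subgroup G} {T : Set G} (hT : T ⊆ K) {c y : G}
    (hy : y ∈ c • T) : y ∈ K ↔ c ∈ K := by
  obtain ⟨t, ht, rfl⟩ := hy
  exact K.mul_mem_cancel_right (hT ht)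

theorem inv_prod_ofFn_mul_prod_ofFn_mem (N : Subgroup G) [N.Normal] {k : ℕ} {a c : Fin k → G}
    (h : ∀ i, (c i)⁻¹ * a i ∈ N) : (List.ofFn c).prod⁻¹ * (List.ofFn a).prod ∈ N := by
  rw [← QuotientGroup.eq]
  change QuotientGroup.mk' N _ = QuotientGroup.mk' N _
  rw [map_list_prod, map_list_prod, List.map_ofFn, List.map_ofFn]
  exact congrArg _ (congrArg List.ofFn (funext fun i => QuotientGroup.eq.mpr (h i)))

theorem existsUnique_prod_ofFn_mem_smul {k : ℕ} {N : ℕ → Subgroup G} (hN : ∀ i, (N i).Normal)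
    (hanti : Antitone N) {T : Fin k → Set G}
    (hT : ∀ i : Fin k, IsLeftTransversalIn (N (i + 1)) (N i) (T i)) (c : Fin k → G) (g : G)
    (hg : (List.ofFn c).prod⁻¹ * g ∈ N 0) :
    ∃! a : Fin k → G, (∀ i, a i ∈ c i • T i) ∧ (List.ofFn a).prod⁻¹ * g ∈ N k := by
  induction k generalizing N g with
  | zero =>
    exact ⟨Fin.elim0, ⟨fun i => i.elim0, by simpa using hg⟩, fun _ _ => funext fun i => i.elim0⟩
  | succ k ih =>
  rw [List.ofFn_succ, List.prod_cons] at hg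
  set C := (List.ofFn fun i : Fin k => c i.succ).prod
  have hx : (c 0)⁻¹ * g * C⁻¹ ∈ N 0 := by
    convert (hN 0).conj_mem _ hg C using 1; group
  obtain ⟨t₀, ⟨ht₀, ht₀x⟩, ht₀uniq⟩ := (hT 0).2 _ hx
  have hg' : C⁻¹ * ((c 0 * t₀)⁻¹ * g) ∈ N 1 := by
    convert (hN 1).conj_mem _ ht₀x C⁻¹ using 1; group
  obtain ⟨a, ⟨ha, hag⟩, hauniq⟩ := ih (N := fun i => N (i + 1)) (fun i => hN (i + 1))
    (fun _ _ h => hanti (Nat.add_le_add_right h 1)) (fun i => hT i.succ) (fun i => c i.succ) _ hg'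
  refine ⟨Fin.cons (c 0 * t₀) a, ⟨Fin.cases ⟨t₀, ht₀, rfl⟩ ha, ?_⟩, fun b ⟨hb, hbg⟩ => ?_⟩
  · rw [List.ofFn_cons, List.prod_cons, mul_inv_rev, mul_assoc]
    exact hag
  obtain ⟨s, hs, hbs⟩ := Set.mem_smul_set.mp (hb 0)
  rw [List.ofFn_succ, List.prod_cons] at hbg
  set B := (List.ofFn fun i : Fin k => b i.succ).prod
  -- modulo `N 1`, every factor after the first may be replaced by its translating element
  have hBC : C⁻¹ * B ∈ N 1 := by
    refine inv_prod_ofFn_mul_prod_ofFn_mem (N 1) fun i => ?_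
    obtain ⟨t, ht, hbt⟩ := Set.mem_smul_set.mp (hb i.succ)
    rw [← hbt, smul_eq_mul, inv_mul_cancel_left]
    exact hanti (Nat.le_add_left 1 i) ((hT i.succ).1 ht)
  have hst₀ : s = t₀ := by
    refine ht₀uniq s ⟨hs, show _ ∈ N 1 from ?_⟩
    rw [← QuotientGroup.eq_one_iff] at hBC ⊢
    have hbg₁ := hanti (by omega : 1 ≤ k + 1) hbg
    rw [← QuotientGroup.eq_one_iff] at hbg₁
    simp only [QuotientGroup.mk_mul, QuotientGroup.mk_inv] at hBC hbg₁ ⊢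
    rw [inv_mul_eq_one] at hBC
    rw [mul_inv_rev, mul_assoc, inv_mul_eq_one, eq_inv_mul_iff_mul_eq, ← hBC, ← hbs, smul_eq_mul,
      QuotientGroup.mk_mul] at hbg₁
    rw [← hbg₁]
    group
  subst hst₀
  have htail : (fun i : Fin k => b i.succ) = a := hauniq _ ⟨fun i => hb i.succ, by
    rwa [← hbs, smul_eq_mul, mul_inv_rev, mul_assoc] at hbg⟩
  rw [← Fin.cons_self_tail b, ← hbs, smul_eq_mul]
  exact congrArg _ htail

theorem disjoint_transversal_smul_mul_inv {K H₁ H₂ : Subgroup G} (hH : H₂ ≤ H₁) {T₀ T₁ : Set G}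
    (hT₀ : IsLeftTransversalIn H₁ K T₀) (hT₁ : IsLeftTransversalIn H₂ H₁ T₁) (h₁ : 1 ∈ T₁)
    {r n : G} (hr : r ∈ T₀) (hn : n ∈ H₂) (hn₁ : n ≠ 1) : Disjoint T₀ ((r * n⁻¹) • T₁) := by
  refine Set.disjoint_left.mpr fun y hy hy' => hn₁ ?_
  obtain ⟨t, ht, rfl⟩ := Set.mem_smul_set.mp hy'
  have hyr : (r * n⁻¹) • t = r := hT₀.eq_of_inv_mul_mem hy hr <| by
    rw [smul_eq_mul, mul_inv_rev, mul_inv_rev, inv_inv, mul_assoc, inv_mul_cancel_right]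
    exact H₁.mul_mem (H₁.inv_mem (hT₁.1 ht)) (hH hn)
  rw [smul_eq_mul, mul_assoc, mul_eq_left, inv_mul_eq_one] at hyr
  subst hyr
  exact hT₁.eq_of_inv_mul_mem ht h₁ (by simpa using hn)

theorem pairwise_disjoint_smul_transversals {k : ℕ} {N : ℕ → Subgroup G} (hanti : Antitone N)
    {T : ℕ → Set G} (hTN : ∀ i, T i ⊆ N i) (hT₀ : IsLeftTransversalIn (N 1) (N 0) (T 0))
    (h₁ : 1 ∈ T 0) {c : ℕ → G} (hc₀ : c 0 = 1)
    (hc : ∀ j, j + 1 < k → c (j + 1) ∈ N j ∧ c (j + 1) ∉ N (j + 1))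
    (h₀₁ : Disjoint (T 0) (c 1 • T 1)) :
    Pairwise (Disjoint on fun i : Fin k => c i • T i) := by
  rw [pairwise_disjoint_on]
  rintro ⟨i, hi⟩ ⟨j, hj⟩ (hij : i < j)
  obtain ⟨j, rfl⟩ : ∃ j', j = j' + 1 := ⟨j - 1, by omega⟩
  have hA_le {y} (hy : y ∈ c (j + 1) • T (j + 1)) : y ∈ N j :=
    (mem_iff_of_mem_smul ((hTN _).trans (hanti j.le_succ)) hy).mpr (hc j hj).1
  have hA_not {y} (hy : y ∈ c (j + 1) • T (j + 1)) : y ∉ N (j + 1) :=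
    fun h => (hc j hj).2 ((mem_iff_of_mem_smul (hTN _) hy).mp h)
  refine Set.disjoint_left.mpr fun y hyi hyj => ?_
  rcases i with _ | i
  · rcases j with _ | j
    · exact Set.disjoint_left.mp h₀₁ (by simpa [hc₀] using hyi) hyj
    · rw [hc₀, one_smul] at hyi
      have hy₁ : y = 1 := (hT₀.eq_of_inv_mul_mem h₁ hyi
        (by simpa using hanti (by omega : 1 ≤ j + 1) (hA_le hyj))).symm
      exact hA_not hyj (hy₁ ▸ one_mem _)
  · exact (hc i (by omega)).2 <| (mem_iff_of_mem_smul (hTN _) hyi).mp <|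
      hanti (by omega : i + 1 ≤ j) (hA_le hyj)

end Factorization

theorem exists_isCompleteFactorization_of_chain {G : Type*} [Group G] {k : ℕ} (hk : 3 ≤ k)
    {N : ℕ → Subgroup G} (hN : ∀ i, (N i).Normal) (hanti : Antitone N) (htop : N 0 = ⊤)
    (hbot : N k = ⊥) (hlt : ∀ j < k, N (j + 1) < N j) :
    ∃ A : Fin k → Set G, IsCompleteFactorization A ∧
      ∀ i : Fin k, (A i).ncard * Nat.card (N (i + 1)) = Nat.card (N i) := by
  choose T hT hT₁ using fun i => exists_isLeftTransversalIn_one_mem (hanti (Nat.le_succ i))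
  choose! e he using fun j (hj : j < k) => SetLike.exists_of_lt (hlt j hj)
  obtain ⟨r, hr, hrN⟩ : ∃ r ∈ T 0, r ∉ N 1 := by
    obtain ⟨r, ⟨hr, hre⟩, -⟩ := (hT 0).2 (e 0) (he 0 (by omega)).1
    exact ⟨r, hr, fun h => (he 0 (by omega)).2 (by simpa using (N 1).mul_mem h hre)⟩
  obtain ⟨n, hn, hn₁⟩ : ∃ n ∈ N 2, n ≠ 1 := by
    have he' := he (k - 1) (by omega)
    rw [Nat.sub_add_cancel (by omega), hbot, mem_bot] at he'
    exact ⟨e (k - 1), hanti (by omega) he'.1, he'.2⟩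
  let c : ℕ → G := fun
    | 0 => 1
    | 1 => r * n⁻¹
    | j + 2 => e (j + 1)
  have hc : ∀ j, j + 1 < k → c (j + 1) ∈ N j ∧ c (j + 1) ∉ N (j + 1)
    | 0, _ => ⟨by simp [htop], fun (h : r * n⁻¹ ∈ N 1) => hrN <| by
        simpa using (N 1).mul_mem h (hanti (Nat.le_succ 1) hn)⟩
    | j + 1, hj => he (j + 1) (by omega)
  refine ⟨fun i => c i • T i, ⟨pairwise_disjoint_smul_transversals hanti (fun i => (hT i).1)
    (hT 0) (hT₁ 0) rfl hc ?_, fun g => ?_⟩, fun i => ?_⟩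
  · exact disjoint_transversal_smul_mul_inv (hanti (Nat.le_succ 1)) (hT 0) (hT 1) (hT₁ 1) hr hn hn₁
  · simpa only [hbot, mem_bot, inv_mul_eq_one, eq_comm] using
      existsUnique_prod_ofFn_mem_smul hN hanti (fun i : Fin k => hT i) (fun i => c i) g
        (by simp [htop])
  · rw [Set.ncard_smul_set]
    exact (hT i).ncard_mul_card (hanti (Nat.le_succ i))

/-- Let `G` be a finite nilpotent group and suppose `|G| = m_1 ⋯ m_k` where `k ≥ 3` and each
`m_i > 1`. Then there exist subsets `A_1, …, A_k` of `G` forming a complete factorization of `G`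
with `|A_i| = m_i` for all `i`. -/
theorem complete_factorization_of_nilpotent {G : Type*} [Group G] [Finite G]
    [Group.IsNilpotent G] {k : ℕ} (hk : 3 ≤ k) (m : Fin k → ℕ) (hm : ∀ i, 1 < m i)
    (hcard : Nat.card G = ∏ i, m i) :
    ∃ A : Fin k → Set G, IsCompleteFactorization A ∧ ∀ i, (A i).ncard = m i := by
  obtain ⟨N, hN, hanti, htop, hbot, hcardN⟩ := exists_normal_chain_card_eq_mul m hcard
  have hlt : ∀ j < k, N (j + 1) < N j := fun j hj =>
    lt_of_le_of_ne (hanti j.le_succ) fun h => by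
      have h' := hcardN ⟨j, hj⟩
      rw [h, eq_comm, mul_eq_right₀ Nat.card_pos.ne'] at h'
      exact (hm ⟨j, hj⟩).ne' h'
  obtain ⟨A, hA, hAcard⟩ := exists_isCompleteFactorization_of_chain hk hN hanti htop hbot hlt
  exact ⟨A, hA, fun i => Nat.eq_of_mul_eq_mul_right Nat.card_pos ((hAcard i).trans (hcardN i))⟩
end

section
/- Let G be a finite abelian group and suppose |G| = m_1 · m_2 · ⋯ · m_k, where k ≥ 3 and each m_i is an integer greater than 1. Then there exist subsets A_1, …, A_k of G that form a complete factorization of G with |A_i| = m_i for all i = 1, …, k. -/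
/-!
Take a chain of subgroups `⊥ = H 0 ≤ H 1 ≤ ⋯ ≤ H k = G` with `|H (j+1)| = |H j| * m j` (in a
finite abelian group every subgroup `N` lies in a subgroup of each order `|N| * d` dividing `|G|`)
and right transversals `S j` of `H j` in `H (j+1)`. Then every `g` is uniquely
`s 0 * ⋯ * s (k-1)` with `s j ∈ S j`, and `|S j| = m j`.

Disjointness comes from the choice of representatives. Fix `x (j+1) ∈ H (j+1) \ H j` and let `S j`
contain both `x j` (its representative of the trivial coset) and `x (j+1) * x j` (so that
`x (j+1) ∉ S j`). For `0 < i < j`, a common element of `S i` and `S j` lies in `H j`, so it is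
`x j`, which lies neither in `H (j-1)` nor in `S (j-1)`. The factor `S 0 = H 1` meets `S 1`, so it
is replaced by the translate `x k • S 0`: it avoids `H (k-1) ⊇ S j` for `j < k-1`, and its coset
of `H (k-1)` is represented in `S (k-1)` by `x k * x (k-1) ∉ x k • H 1`, since `k ≥ 3` gives
`x (k-1) ∉ H (k-2) ⊇ H 1`.
-/

open Finset
open scoped Pointwise

section Group

variable {G : Type*} [Group G]

def IsRightTransversal (H K : Subgroup G) (S : Set G) : Prop :=
  S ⊆ K ∧ ∀ g ∈ K, ∃! s ∈ S, g * s⁻¹ ∈ H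

namespace IsRightTransversal

variable {H K : Subgroup G} {S : Set G}

theorem eq_of_mul_inv_mem (hS : IsRightTransversal H K S) {a b : G} (ha : a ∈ S) (hb : b ∈ S)
    (hab : a * b⁻¹ ∈ H) : a = b :=
  (hS.2 a (hS.1 ha)).unique ⟨ha, by simp⟩ ⟨hb, hab⟩

theorem ncard_mul_card (hS : IsRightTransversal H K S) (hHK : H ≤ K) :
    S.ncard * Nat.card H = Nat.card K := by
  let μ : S × H → K := fun p => ⟨p.2 * p.1, K.mul_mem (hHK p.2.2) (hS.1 p.1.2)⟩
  have hμ : Function.Bijective μ := by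
    constructor
    · rintro ⟨⟨s, hs⟩, ⟨h, hh⟩⟩ ⟨⟨s', hs'⟩, ⟨h', hh'⟩⟩ heq
      have hg : h * s = h' * s' := congrArg Subtype.val heq
      obtain rfl : s = s' := (hS.2 (h * s) (K.mul_mem (hHK hh) (hS.1 hs))).unique
        ⟨hs, by simpa using hh⟩ ⟨hs', by simpa [hg] using hh'⟩
      obtain rfl : h = h' := mul_right_cancel hg
      rfl
    · rintro ⟨g, hg⟩
      obtain ⟨s, ⟨hs, hgs⟩, -⟩ := hS.2 g hg
      exact ⟨(⟨s, hs⟩, ⟨g * s⁻¹, hgs⟩), by simp [μ]⟩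
  rw [← Nat.card_coe_set_eq, ← Nat.card_prod, Nat.card_congr (Equiv.ofBijective μ hμ)]

end IsRightTransversal

theorem exists_isRightTransversal_superset {H K : Subgroup G} (hHK : H ≤ K) {P : Set G}
    (hPK : P ⊆ K) (hP : ∀ a ∈ P, ∀ b ∈ P, a * b⁻¹ ∈ H → a = b) :
    ∃ S, IsRightTransversal H K S ∧ P ⊆ S := by
  classical
  let r := QuotientGroup.rightRel H
  have hr : ∀ a b : G, Quotient.mk r a = Quotient.mk r b ↔ b * a⁻¹ ∈ H := fun a b =>
    Quotient.eq.trans QuotientGroup.rightRel_apply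
  let σ : Quotient r → G := fun q =>
    if h : ∃ p ∈ P, Quotient.mk r p = q then h.choose else q.out
  have hσ : ∀ q, Quotient.mk r (σ q) = q := by
    intro q
    simp only [σ]
    split_ifs with h
    · exact h.choose_spec.2
    · exact q.out_eq
  refine ⟨{s | s ∈ K ∧ σ (Quotient.mk r s) = s}, ⟨fun s hs => hs.1, fun g hg => ?_⟩,
    fun p hp => ?_⟩
  · have hgσ : g * (σ (Quotient.mk r g))⁻¹ ∈ H := (hr _ _).1 (hσ _)
    refine ⟨σ (Quotient.mk r g), ⟨⟨?_, by rw [hσ]⟩, hgσ⟩, ?_⟩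
    · simpa using K.mul_mem (K.inv_mem (hHK hgσ)) hg
    · rintro s ⟨⟨-, hs⟩, hgs⟩
      rw [← hs, (hr s g).2 hgs]
  · have h : ∃ p' ∈ P, Quotient.mk r p' = Quotient.mk r p := ⟨p, hp, rfl⟩
    refine ⟨hPK hp, ?_⟩
    simp only [σ, dif_pos h]
    exact (hP p hp _ h.choose_spec.1 ((hr _ _).1 h.choose_spec.2)).symm

theorem exists_isRightTransversal_pair {H K : Subgroup G} (hHK : H ≤ K) {a b : G} (ha : a ∈ K)
    (hb : b ∈ K) (hab : b * a⁻¹ ∉ H) :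
    ∃ S, IsRightTransversal H K S ∧ a ∈ S ∧ b ∈ S := by
  obtain ⟨S, hS, hPS⟩ := exists_isRightTransversal_superset hHK (P := {a, b})
    (Set.insert_subset ha (Set.singleton_subset_iff.2 hb)) (by
      rintro _ (rfl | rfl) _ (rfl | rfl) h
      · rfl
      · exact absurd (by simpa using H.inv_mem h) hab
      · exact absurd h hab
      · rfl)
  exact ⟨S, hS, hPS (by simp), hPS (by simp)⟩

theorem existsUnique_prod_of_isRightTransversal {H : ℕ → Subgroup G} {S : ℕ → Set G}
    (hH : Monotone H) (hH0 : H 0 = ⊥) :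
    ∀ n, (∀ i < n, IsRightTransversal (H i) (H (i + 1)) (S i)) →
      ∀ g ∈ H n, ∃! f : Fin n → G, (∀ i : Fin n, f i ∈ S i) ∧
        (List.ofFn f).prod = g := by
  intro n
  induction n with
  | zero =>
    intro _ g hg
    rw [hH0, Subgroup.mem_bot] at hg
    exact ⟨Fin.elim0, ⟨fun i => i.elim0, by simp [hg]⟩, fun f _ => funext fun i => i.elim0⟩
  | succ n ih =>
    intro hS g hg
    have prod_eq : ∀ f : Fin (n + 1) → G,
        (List.ofFn f).prod = (List.ofFn (Fin.init f)).prod * f (Fin.last n) := fun f => by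
      rw [List.ofFn_succ', List.prod_concat]; rfl
    obtain ⟨s, ⟨hs, hgs⟩, hs_unique⟩ := (hS n n.lt_succ_self).2 g hg
    obtain ⟨f, ⟨hfS, hfg⟩, hf_unique⟩ := ih (fun i hi => hS i (by omega)) _ hgs
    refine ⟨Fin.snoc f s, ⟨Fin.lastCases (by simpa) (by simpa), ?_⟩,
      fun f' ⟨hf'S, hf'g⟩ => ?_⟩
    · rw [prod_eq, Fin.init_snoc, Fin.snoc_last, hfg, inv_mul_cancel_right]
    have hinit : (List.ofFn (Fin.init f')).prod ∈ H n :=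
      (H n).list_prod_mem fun _ hy => by
        obtain ⟨i, rfl⟩ := List.mem_ofFn.1 hy
        exact hH i.isLt ((hS i (by omega)).1 (hf'S i.castSucc))
    have hlast : f' (Fin.last n) = s :=
      hs_unique _ ⟨hf'S (Fin.last n), by rwa [← hf'g, prod_eq, mul_inv_cancel_right]⟩
    have hinit_eq : Fin.init f' = f :=
      hf_unique _ ⟨fun i => hf'S i.castSucc, by
        rw [← hlast, ← hf'g, prod_eq, mul_inv_cancel_right]⟩
    rw [← hinit_eq, ← hlast, Fin.snoc_init_self]

theorem exists_seq_mem_and_succ_notMem {H : ℕ → Subgroup G} {k : ℕ}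
    (hH : ∀ j < k, H j < H (j + 1)) :
    ∃ x : ℕ → G, (∀ j, x j ∈ H j) ∧ ∀ j < k, x (j + 1) ∉ H j := by
  have : ∀ j, ∃ y ∈ H (j + 1), j < k → y ∉ H j := fun j =>
    if hj : j < k then (SetLike.exists_of_lt (hH j hj)).imp fun _ hy => ⟨hy.1, fun _ => hy.2⟩
    else ⟨1, one_mem _, fun h => absurd h hj⟩
  choose y hy hy' using this
  refine ⟨fun | 0 => 1 | j + 1 => y j, ?_, hy'⟩
  rintro (_ | j)
  · exact one_mem _
  · exact hy j

theorem exists_isRightTransversal_seq {H : ℕ → Subgroup G} (hH : Monotone H) {x : ℕ → G}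
    (hxH : ∀ j, x j ∈ H j) {k : ℕ} (hx : ∀ j < k, x (j + 1) ∉ H j) :
    ∃ S : ℕ → Set G, ∀ j < k,
      IsRightTransversal (H j) (H (j + 1)) (S j) ∧ x j ∈ S j ∧ x (j + 1) * x j ∈ S j := by
  have : ∀ j, ∃ S : Set G, j < k →
      IsRightTransversal (H j) (H (j + 1)) S ∧ x j ∈ S ∧ x (j + 1) * x j ∈ S := fun j =>
    if hj : j < k then
      (exists_isRightTransversal_pair (hH j.le_succ) (hH j.le_succ (hxH j))
        ((H _).mul_mem (hxH _) (hH j.le_succ (hxH j)))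
        (by rw [mul_inv_cancel_right]; exact hx j hj)).imp fun _ hS _ => hS
    else ⟨∅, fun h => absurd h hj⟩
  choose S hS using this
  exact ⟨S, hS⟩

end Group

section CommGroup

variable {G : Type*} [CommGroup G]

theorem existsUnique_prod_smul {n : ℕ} {S : Fin n → Set G}
    (hS : ∀ g, ∃! f : Fin n → G, (∀ i, f i ∈ S i) ∧ (List.ofFn f).prod = g)
    (c : Fin n → G) (g : G) :
    ∃! f : Fin n → G, (∀ i, f i ∈ c i • S i) ∧ (List.ofFn f).prod = g := by
  simp only [List.prod_ofFn] at hS ⊢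
  obtain ⟨f, ⟨hfS, hfg⟩, hf_unique⟩ := hS ((∏ i, c i)⁻¹ * g)
  refine ⟨c * f, ⟨fun i => Set.smul_mem_smul_set (hfS i), ?_⟩,
    fun f' ⟨hf'S, hf'g⟩ => ?_⟩
  · simp [Finset.prod_mul_distrib, hfg]
  · have : c⁻¹ * f' = f := hf_unique _ ⟨fun i => Set.mem_smul_set_iff_inv_smul_mem.1 (hf'S i),
      by simp [Finset.prod_mul_distrib, hf'g]⟩
    rw [← this, mul_inv_cancel_left]

theorem Subgroup.exists_le_card_eq_mul [Finite G] (N : Subgroup G) {d : ℕ}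
    (hd : Nat.card N * d ∣ Nat.card G) :
    ∃ K : Subgroup G, N ≤ K ∧ Nat.card K = Nat.card N * d := by
  induction d using Nat.strong_induction_on generalizing N with
  | _ d ih =>
  rcases lt_trichotomy d 1 with hd0 | rfl | hd1
  · obtain rfl : d = 0 := by omega
    exact absurd (Nat.eq_zero_of_zero_dvd (by simpa using hd)) Nat.card_pos.ne'
  · exact ⟨N, le_rfl, (mul_one _).symm⟩
  set p := d.minFac
  have hp : Fact p.Prime := ⟨Nat.minFac_prime hd1.ne'⟩
  have hpd : p ∣ d := Nat.minFac_dvd d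
  have hdQ : d ∣ Nat.card (G ⧸ N) := by
    rw [N.card_eq_card_quotient_mul_card_subgroup, mul_comm (Nat.card (G ⧸ N))] at hd
    exact Nat.dvd_of_mul_dvd_mul_left Nat.card_pos hd
  obtain ⟨y, hy⟩ := exists_prime_orderOf_dvd_card' p (hpd.trans hdQ)
  set N' := (Subgroup.zpowers y).comap (QuotientGroup.mk' N)
  have hNN' : N ≤ N' := (QuotientGroup.ker_mk' N).symm.le.trans (MonoidHom.ker_le_comap _ _)
  have hN' : Nat.card N' = Nat.card N * p := by
    rw [← hy, ← Nat.card_zpowers]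
    exact QuotientGroup.card_preimage_mk N (Subgroup.zpowers y)
  have hN'd : Nat.card N' * (d / p) = Nat.card N * d := by
    rw [hN', mul_assoc, Nat.mul_div_cancel' hpd]
  obtain ⟨K, hK, hKcard⟩ :=
    ih (d / p) (Nat.div_lt_self (by omega) hp.out.one_lt) N' (hN'd ▸ hd)
  exact ⟨K, hNN'.trans hK, hKcard.trans hN'd⟩

theorem exists_monotone_card_eq_prod [Finite G] (c : ℕ → ℕ) {n : ℕ}
    (hn : ∏ j ∈ range n, c j ∣ Nat.card G) :
    ∃ H : ℕ → Subgroup G, Monotone H ∧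
      ∀ i ≤ n, Nat.card (H i) = ∏ j ∈ range i, c j := by
  induction n with
  | zero => exact ⟨fun _ => ⊥, monotone_const, by simp⟩
  | succ n ih =>
    rw [prod_range_succ] at hn
    obtain ⟨H, hH, hcard⟩ := ih (dvd_of_mul_right_dvd hn)
    obtain ⟨K, hHK, hK⟩ := (H n).exists_le_card_eq_mul (d := c n) (by rwa [hcard n le_rfl])
    refine ⟨fun i => if i ≤ n then H i else K, fun i j hij => ?_, fun i hi => ?_⟩
    · dsimp only
      split_ifs with hi hj hj
      · exact hH hij
      · exact (hH hi).trans hHK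
      · omega
      · exact le_rfl
    · dsimp only
      split_ifs with h
      · exact hcard i h
      · rw [show i = n + 1 by omega, hK, hcard n le_rfl, prod_range_succ]

section Transversals

variable {H : ℕ → Subgroup G} {x : ℕ → G} {S : ℕ → Set G} {k : ℕ}

theorem disjoint_of_lt (hH : Monotone H) (hxH : ∀ j, x j ∈ H j)
    (hx : ∀ j < k, x (j + 1) ∉ H j)
    (hS : ∀ j < k,
      IsRightTransversal (H j) (H (j + 1)) (S j) ∧ x j ∈ S j ∧ x (j + 1) * x j ∈ S j)
    {i j : ℕ} (hi : i ≠ 0) (hij : i < j) (hj : j < k) : Disjoint (S i) (S j) := by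
  obtain ⟨i, rfl⟩ := Nat.exists_eq_add_one_of_ne_zero hi
  obtain ⟨hSi, -, hSi'⟩ := hS (i + 1) (by omega)
  obtain ⟨hSj, hxj, -⟩ := hS j hj
  rw [Set.disjoint_left]
  intro a hai haj
  obtain rfl : a = x j := hSj.eq_of_mul_inv_mem haj hxj
    ((H j).mul_mem (hH hij (hSi.1 hai)) ((H j).inv_mem (hxH j)))
  obtain rfl | hij := eq_or_lt_of_le (Nat.succ_le_of_lt hij)
  · have h := hSi.eq_of_mul_inv_mem hSi' hai (by rw [mul_inv_cancel_comm]; exact hxH (i + 1))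
    exact hx i (by omega) (mul_eq_left.1 h ▸ one_mem _)
  · obtain ⟨j, rfl⟩ : ∃ j', j = j' + 1 := ⟨j - 1, by omega⟩
    exact hx j (by omega) (hH (by omega) (hSi.1 hai))

theorem disjoint_smul_of_three_le (hk : 3 ≤ k) (hH : Monotone H) (hxH : ∀ j, x j ∈ H j)
    (hx : ∀ j < k, x (j + 1) ∉ H j)
    (hS : ∀ j < k,
      IsRightTransversal (H j) (H (j + 1)) (S j) ∧ x j ∈ S j ∧ x (j + 1) * x j ∈ S j)
    {j : ℕ} (hj0 : j ≠ 0) (hj : j < k) : Disjoint (x k • S 0) (S j) := by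
  obtain ⟨hSj, -, hSj'⟩ := hS j hj
  rw [Set.disjoint_left]
  rintro _ ⟨h, hh, rfl⟩ haj
  have hh1 : h ∈ H 1 := (hS 0 (by omega)).1.1 hh
  obtain ⟨k, rfl⟩ : ∃ k', k = k' + 1 := ⟨k - 1, by omega⟩
  obtain hjk | rfl := lt_or_eq_of_le (Nat.lt_succ_iff.1 hj)
  · refine hx k k.lt_succ_self ?_
    simpa using (H k).mul_mem (hH hjk (hSj.1 haj)) ((H k).inv_mem (hH (by omega) hh1))
  · have h := hSj.eq_of_mul_inv_mem haj hSj' (by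
      show x (j + 1) * h * (x (j + 1) * x j)⁻¹ ∈ H j
      rw [← div_eq_mul_inv, mul_div_mul_left_eq_div, div_eq_mul_inv]
      exact (H _).mul_mem (hH (by omega) hh1) ((H _).inv_mem (hxH _)))
    obtain rfl := mul_left_cancel h
    obtain ⟨j, rfl⟩ := Nat.exists_eq_add_one_of_ne_zero hj0
    exact hx j (by omega) (hH (by omega) hh1)

theorem isCompleteFactorization_mulSingle_smul (hk : 3 ≤ k) (hH : Monotone H) (hH0 : H 0 = ⊥)
    (hHk : H k = ⊤) (hxH : ∀ j, x j ∈ H j) (hx : ∀ j < k, x (j + 1) ∉ H j)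
    (hS : ∀ j < k,
      IsRightTransversal (H j) (H (j + 1)) (S j) ∧ x j ∈ S j ∧ x (j + 1) * x j ∈ S j) :
    IsCompleteFactorization fun i : Fin k => (Pi.mulSingle 0 (x k) : ℕ → G) i • S i := by
  refine ⟨(pairwise_disjoint_on _).2 fun i j hij => ?_, existsUnique_prod_smul (fun g => ?_) _⟩
  · have hj : (j : ℕ) ≠ 0 := by have := Fin.lt_def.1 hij; omega
    rw [Pi.mulSingle_eq_of_ne hj, one_smul]
    by_cases hi : (i : ℕ) = 0
    · rw [hi, Pi.mulSingle_eq_same]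
      exact disjoint_smul_of_three_le hk hH hxH hx hS hj j.isLt
    · rw [Pi.mulSingle_eq_of_ne hi, one_smul]
      exact disjoint_of_lt hH hxH hx hS hi hij j.isLt
  · exact existsUnique_prod_of_isRightTransversal hH hH0 k (fun j hj => (hS j hj).1) g
      (hHk ▸ Subgroup.mem_top g)

end Transversals

end CommGroup

/-- Let `G` be a finite abelian group and suppose `|G| = m_1 ⋯ m_k` where `k ≥ 3` and each
`m_i > 1`. Then there exist subsets `A_1, …, A_k` of `G` forming a complete factorization of `G`
with `|A_i| = m_i` for all `i`. -/
theorem complete_factorization_of_abelian {G : Type*} [CommGroup G] [Finite G]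
    {k : ℕ} (hk : 3 ≤ k) (m : Fin k → ℕ) (hm : ∀ i, 1 < m i)
    (hcard : Nat.card G = ∏ i, m i) :
    ∃ A : Fin k → Set G, IsCompleteFactorization A ∧ ∀ i, (A i).ncard = m i := by
  set c : ℕ → ℕ := fun j => if h : j < k then m ⟨j, h⟩ else 1
  have hc : ∀ i : Fin k, c i = m i := fun i => dif_pos i.isLt
  have hGc : Nat.card G = ∏ j ∈ range k, c j := by
    rw [hcard, ← Fin.prod_univ_eq_prod_range]
    simp only [hc]
  obtain ⟨H, hH, hHcard⟩ := exists_monotone_card_eq_prod c hGc.symm.dvd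
  have hstep : ∀ j < k, Nat.card (H (j + 1)) = Nat.card (H j) * c j := fun j hj => by
    rw [hHcard _ hj, hHcard _ hj.le, prod_range_succ]
  have hlt : ∀ j < k, H j < H (j + 1) := fun j hj =>
    lt_of_le_of_ne (hH j.le_succ) fun h => (hm ⟨j, hj⟩).ne' <| by
      have h' := hstep j hj
      rw [h] at h'
      rw [← hc ⟨j, hj⟩]
      exact (Nat.mul_eq_left Nat.card_pos.ne').1 h'.symm
  obtain ⟨x, hxH, hx⟩ := exists_seq_mem_and_succ_notMem hlt
  obtain ⟨S, hS⟩ := exists_isRightTransversal_seq hH hxH hx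
  have hH0 : H 0 = ⊥ := Subgroup.card_eq_one.1 (by simpa using hHcard 0 k.zero_le)
  have hHk : H k = ⊤ := (Subgroup.card_eq_iff_eq_top _).1 ((hHcard k le_rfl).trans hGc.symm)
  refine ⟨_, isCompleteFactorization_mulSingle_smul hk hH hH0 hHk hxH hx hS, fun i => ?_⟩
  have h := (hS i i.isLt).1.ncard_mul_card (hH i.val.le_succ)
  rw [hstep i i.isLt, mul_comm] at h
  rw [Set.ncard_smul_set, ← hc, Nat.eq_of_mul_eq_mul_left Nat.card_pos h]
end

section
/- Let G be a finite nilpotent group with |G| = m_1 · m_2 · ⋯ · m_k, where each m_i is an integer greater than 1. Then there exists an increasing chain of subgroups H_1 < H_2 < ⋯ < H_k = G such that |H_i| = m_1 · m_2 · ⋯ · m_i for all i = 1, 2, …, k. -/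
/-- The cardinality of a full pi subgroup is the product of the cardinalities. -/
lemma card_pi_subgroup {η : Type*} [Fintype η] {f : η → Type*} [∀ i, Group (f i)]
    (H : ∀ i, Subgroup (f i)) :
    Nat.card (Subgroup.pi Set.univ H) = ∏ i, Nat.card (H i) := by
  rw [← Nat.card_pi]
  exact Nat.card_congr
    ⟨fun x i => ⟨x.1 i, x.2 i trivial⟩, fun g => ⟨fun i => g i, fun i _ => (g i).2⟩,
      fun _ => rfl, fun _ => rfl⟩

/-- A finite nilpotent group has a subgroup of every order dividing the group order. -/
theorem exists_subgroup_card_eq_of_dvd {G : Type*} [Group G] [Finite G]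
    [Group.IsNilpotent G] {d : ℕ} (hd : d ∣ Nat.card G) :
    ∃ H : Subgroup G, Nat.card H = d := by
  classical
  have hn0 : Nat.card G ≠ 0 := Nat.card_pos.ne'
  have hd0 : d ≠ 0 := by rintro rfl; exact hn0 (Nat.eq_zero_of_zero_dvd hd)
  have htfae := (isNilpotent_of_finite_tfae (G := G)).out 0 3
  have hnormal : ∀ {p : ℕ} [Fact p.Prime] (P : Sylow p G), P.Normal := by
    intro p hp P
    exact htfae.mp ‹_› p hp P
  let e := Sylow.directProductOfNormal hnormal
  set ps := (Nat.card G).primeFactors with hps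
  have hfle : d.factorization ≤ (Nat.card G).factorization :=
    (Nat.factorization_le_iff_dvd hd0 hn0).2 hd
  have hS : ∀ (p : ps) (P : Sylow p.1 G),
      ∃ S : Subgroup ↥P, Nat.card S = p.1 ^ d.factorization p.1 := by
    rintro ⟨p, hp⟩ P
    haveI : Fact p.Prime := ⟨Nat.prime_of_mem_primeFactors hp⟩
    refine Sylow.exists_subgroup_card_pow_prime p ?_
    exact (Sylow.card_eq_multiplicity P) ▸ pow_dvd_pow p (hfle p)
  choose S hScard using hS
  haveI instF : ∀ p : ps, Fintype (Sylow p.1 G) := fun p =>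
    letI : Fact p.1.Prime := ⟨Nat.prime_of_mem_primeFactors p.2⟩
    (Sylow.unique_of_normal (default : Sylow p.1 G) (hnormal default)).fintype
  let T : Subgroup (∀ p : ps, ∀ P : Sylow p.1 G, ↥P) :=
    Subgroup.pi Set.univ (fun p => Subgroup.pi Set.univ (fun P => S p P))
  have hTcard : Nat.card T = d := by
    have h1 : Nat.card T = ∏ p : ps, Nat.card (Subgroup.pi Set.univ (fun P => S p P)) :=
      card_pi_subgroup _
    have h2 : ∀ p : ps, Nat.card (Subgroup.pi Set.univ (fun P => S p P)) =
        p.1 ^ d.factorization p.1 := by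
      rintro ⟨p, hp⟩
      haveI : Fact p.Prime := ⟨Nat.prime_of_mem_primeFactors hp⟩
      have u : Unique (Sylow p G) :=
        Sylow.unique_of_normal (default : Sylow p G) (hnormal default)
      have hone : @Fintype.card (Sylow p G) (instF ⟨p, hp⟩) = 1 :=
        (@Fintype.card_eq_one_iff _ (instF ⟨p, hp⟩)).mpr
          ⟨default, fun y => (u.uniq y).trans (u.uniq _).symm⟩
      rw [card_pi_subgroup]
      simp only [hScard]
      rw [Finset.prod_const, @Finset.card_univ _ (instF ⟨p, hp⟩), hone, pow_one]
    rw [h1]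
    calc ∏ p : ps, Nat.card (Subgroup.pi Set.univ (fun P => S p P))
        = ∏ p : ps, p.1 ^ d.factorization p.1 := Finset.prod_congr rfl (fun p _ => h2 p)
      _ = ∏ p ∈ ps, p ^ d.factorization p :=
          Finset.prod_finset_coe (fun p => p ^ d.factorization p) _
      _ = ∏ p ∈ d.primeFactors, p ^ d.factorization p := by
          refine (Finset.prod_subset ?_ ?_).symm
          · exact hps ▸ Nat.primeFactors_mono hd hn0
          · intro p _ hp
            rw [← Nat.support_factorization, Finsupp.notMem_support_iff] at hp
            rw [hp, pow_zero]
      _ = d := by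
          rw [← Nat.support_factorization]
          exact Nat.factorization_prod_pow_eq_self hd0
  refine ⟨T.map e.toMonoidHom, ?_⟩
  rw [← hTcard]
  exact (Nat.card_congr (T.equivMapOfInjective e.toMonoidHom e.injective).toEquiv).symm

/-- Inside any subgroup of a finite nilpotent group there is a subgroup of every order
dividing the order of that subgroup. -/
theorem exists_subgroup_le_card_eq_of_dvd {G : Type*} [Group G] [Finite G]
    [Group.IsNilpotent G] (K : Subgroup G) {d : ℕ} (hd : d ∣ Nat.card K) :
    ∃ L : Subgroup G, L ≤ K ∧ Nat.card L = d := by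
  obtain ⟨S, hS⟩ := exists_subgroup_card_eq_of_dvd (G := ↥K) hd
  refine ⟨S.map K.subtype, Subgroup.map_subtype_le S, ?_⟩
  rw [← hS]
  exact (Nat.card_congr (S.equivMapOfInjective K.subtype K.subtype_injective).toEquiv).symm

/-- Let `G` be a finite nilpotent group with `|G| = m_1 ⋯ m_k` where each `m_i > 1`.
Then there exists a chain of subgroups `H_1 < H_2 < ⋯ < H_k = G` with
`|H_i| = m_1 ⋯ m_i` for all `i = 1, …, k`.  (Subgroups are indexed `1, …, k`.) -/
theorem exists_subgroup_chain_of_nilpotent {G : Type*} [Group G] [Finite G]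
    [Group.IsNilpotent G] {k : ℕ} (hk : 1 ≤ k) (m : ℕ → ℕ)
    (hm : ∀ i, 1 ≤ i → i ≤ k → 1 < m i)
    (hcard : Nat.card G = ∏ i ∈ Finset.Icc 1 k, m i) :
    ∃ H : ℕ → Subgroup G,
      (∀ i, 1 ≤ i → i < k → H i < H (i + 1)) ∧
      H k = ⊤ ∧
      (∀ i, 1 ≤ i → i ≤ k → Nat.card (H i) = ∏ j ∈ Finset.Icc 1 i, m j) := by
  classical
  -- descending construction
  have main : ∀ t : ℕ, ∃ H : ℕ → Subgroup G, H k = ⊤ ∧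
      (∀ i, 1 ≤ i → k - t ≤ i → i ≤ k → Nat.card (H i) = ∏ j ∈ Finset.Icc 1 i, m j) ∧
      (∀ i, 1 ≤ i → k - t ≤ i → i < k → H i ≤ H (i + 1)) := by
    intro t
    induction t with
    | zero =>
      refine ⟨fun _ => ⊤, rfl, ?_, ?_⟩
      · intro i h1 h2 h3
        have : i = k := le_antisymm h3 (by omega)
        subst this
        rw [← hcard]
        exact Nat.card_congr (Subgroup.topEquiv (G := G)).toEquiv
      · intro i h1 h2 h3; omega
    | succ t ih =>
      obtain ⟨H, htop, hcards, hle⟩ := ih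
      by_cases hkt : k - t ≤ 1
      · exact ⟨H, htop, fun i h1 h2 h3 => hcards i h1 (by omega) h3,
          fun i h1 h2 h3 => hle i h1 (by omega) h3⟩
      · -- k - t ≥ 2; set j := k - t, j' := j - 1 = k - (t+1)
        set j := k - t with hj
        have hj2 : 2 ≤ j := by omega
        have hdvd : (∏ i ∈ Finset.Icc 1 (j - 1), m i) ∣ Nat.card (H j) := by
          rw [hcards j (by omega) le_rfl (by omega)]
          have : j = (j - 1) + 1 := by omega
          rw [this, Finset.prod_Icc_succ_top (by omega : 1 ≤ j - 1 + 1)]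
          exact Dvd.intro _ rfl
        obtain ⟨L, hLle, hLcard⟩ := exists_subgroup_le_card_eq_of_dvd (H j) hdvd
        refine ⟨fun i => if i = j - 1 then L else H i, ?_, ?_, ?_⟩
        · have : ¬ (k = j - 1) := by omega
          simp [this, htop]
        · intro i h1 h2 h3
          by_cases hij : i = j - 1
          · subst hij; simp only [if_pos rfl]; exact hLcard
          · simp only [if_neg hij]
            exact hcards i h1 (by omega) h3
        · intro i h1 h2 h3
          by_cases hij : i = j - 1
          · subst hij
            have h5 : j - 1 + 1 = j := by omega
            show (if j - 1 = j - 1 then L else H (j - 1)) ≤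
              (if j - 1 + 1 = j - 1 then L else H (j - 1 + 1))
            rw [if_pos rfl, h5, if_neg (show ¬ j = j - 1 by omega)]
            exact hLle
          · have h4 : ¬ (i + 1 = j - 1) := by omega
            simp only [if_neg hij, if_neg h4]
            exact hle i h1 (by omega) h3
  obtain ⟨H, htop, hcards, hle⟩ := main (k - 1)
  have hk1 : k - (k - 1) = 1 := by omega
  rw [hk1] at hcards hle
  refine ⟨H, ?_, htop, fun i h1 h2 => hcards i h1 h1 h2⟩
  intro i h1 h2
  refine lt_of_le_of_ne (hle i h1 h1 h2) ?_
  intro heq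
  have c1 : Nat.card (H i) = ∏ j ∈ Finset.Icc 1 i, m j := hcards i h1 h1 (by omega)
  have c2 : Nat.card (H (i + 1)) = ∏ j ∈ Finset.Icc 1 (i + 1), m j :=
    hcards (i + 1) (by omega) (by omega) (by omega)
  rw [heq, c2, Finset.prod_Icc_succ_top (by omega : 1 ≤ i + 1)] at c1
  have hpos : 0 < ∏ j ∈ Finset.Icc 1 i, m j := by
    refine Finset.prod_pos ?_
    intro j hj
    rw [Finset.mem_Icc] at hj
    exact lt_trans one_pos (hm j hj.1 (by omega))
  have hmi : 1 < m (i + 1) := hm (i + 1) (by omega) (by omega)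
  nlinarith
end

section
/- Let n ≥ 3 and let G = ℤ/10^nℤ. Define A_1 = 10^{n-1}·{0, 1, 2, …, 9}, A_i = 10^{n-i-1}·{1, 11, 21, …, 91} for i = 2, …, n−1, and A_n = {10^{n-2}, 101, 2, 3, 4, 5, 6, 7, 8, 9}. Then A_1, …, A_n form a complete factorization of G, and |A_i| = 10 for all i. -/
/-- Subsets `A 0, …, A (k-1)` of an additive abelian group `G` form a complete factorization of
`G` if they are pairwise disjoint and every `g ∈ G` is uniquely represented as
`g = a_0 + a_1 + ⋯ + a_(k-1)` with `a_i ∈ A i` for each `i`. -/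
def IsCompleteFactorizationAdd {G : Type*} [AddCommGroup G] {k : ℕ} (A : Fin k → Set G) : Prop :=
  (∀ i j : Fin k, i ≠ j → Disjoint (A i) (A j)) ∧
  ∀ g : G, ∃! f : Fin k → G, (∀ i, f i ∈ A i) ∧ ∑ i, f i = g


open Finset in
lemma cfz_sum_digits_lt (N : ℕ) (c : ℕ → ℕ) (hc : ∀ m, c m < 10) :
    ∑ m ∈ Finset.range N, c m * 10 ^ m < 10 ^ N := by
  induction N with
  | zero => simp
  | succ N ih =>
    rw [Finset.sum_range_succ, pow_succ]
    have := hc N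
    nlinarith [pow_pos (by norm_num : (0:ℕ) < 10) N]

open Finset in
lemma cfz_sum_digits_inj : ∀ (N : ℕ) (c c' : ℕ → ℕ), (∀ m, c m < 10) → (∀ m, c' m < 10) →
    (∑ m ∈ Finset.range N, c m * 10 ^ m = ∑ m ∈ Finset.range N, c' m * 10 ^ m) →
    ∀ m < N, c m = c' m := by
  intro N
  induction N with
  | zero => intro c c' _ _ _ m hm; omega
  | succ N ih =>
    intro c c' hc hc' h m hm
    rw [Finset.sum_range_succ', Finset.sum_range_succ'] at h
    have hrw : ∀ (d : ℕ → ℕ), ∑ i ∈ Finset.range N, d (i+1) * 10 ^ (i+1)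
        = 10 * ∑ i ∈ Finset.range N, d (i+1) * 10 ^ i := by
      intro d
      rw [Finset.mul_sum]
      refine Finset.sum_congr rfl fun i _ => by ring
    rw [hrw c, hrw c'] at h
    simp only [pow_zero, mul_one] at h
    have h0 : c 0 = c' 0 := by have := hc 0; have := hc' 0; omega
    have hS : ∑ i ∈ Finset.range N, c (i+1) * 10 ^ i
        = ∑ i ∈ Finset.range N, c' (i+1) * 10 ^ i := by omega
    rcases m with _ | m
    · exact h0
    · exact ih (fun k => c (k+1)) (fun k => c' (k+1)) (fun k => hc _) (fun k => hc' _) hS m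
        (by omega)

lemma cfz_sum_single (N a v : ℕ) (ha : a < N) :
    ∑ m ∈ Finset.range N, (if m = a then v else 0) * 10 ^ m = v * 10 ^ a := by
  rw [Finset.sum_eq_single_of_mem a (Finset.mem_range.2 ha)]
  · simp
  · intro b _ hb; simp [hb]


def cfzT (n : ℕ) (d : ℕ) : ℕ := if d = 0 then 10 ^ (n - 2) else if d = 1 then 101 else d

def cfzE (n : ℕ) (i d : ℕ) : ℕ :=
  if i = 0 then 10 ^ (n - 1) * d
  else if i = n - 1 then cfzT n d
  else 10 ^ (n - i - 2) * (10 * d + 1)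

def cfzP (n : ℕ) (i d m : ℕ) : ℕ :=
  if i = 0 then (if m = n - 1 then d else 0)
  else if i = n - 1 then
    (if d = 0 then (if m = n - 2 then 1 else 0)
     else if d = 1 then ((if m = 0 then 1 else 0) + (if m = 2 then 1 else 0))
     else (if m = 0 then d else 0))
  else ((if m = n - 2 - i then 1 else 0) + (if m = n - 1 - i then d else 0))

lemma cfzP_lt {n i d : ℕ} (hn : 3 ≤ n) (hi : i < n) (hd : d ≤ 9) (m : ℕ) :
    cfzP n i d m < 10 := by
  unfold cfzP; split_ifs <;> omega

lemma cfzE_eq_sum {n i d : ℕ} (hn : 3 ≤ n) (hi : i < n) (hd : d ≤ 9) :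
    cfzE n i d = ∑ m ∈ Finset.range n, cfzP n i d m * 10 ^ m := by
  by_cases h0 : i = 0
  · subst h0
    simp only [cfzE, cfzP, eq_self_iff_true, if_true]
    rw [cfz_sum_single n (n-1) d (by omega)]
    ring
  · by_cases h1 : i = n - 1
    · subst h1
      simp only [cfzE, cfzP, h0, if_false, eq_self_iff_true, if_true, cfzT]
      by_cases hd0 : d = 0
      · subst hd0
        simp only [eq_self_iff_true, if_true]
        rw [cfz_sum_single n (n-2) 1 (by omega)]; ring
      · by_cases hd1 : d = 1
        · subst hd1
          simp only [hd0, if_false, eq_self_iff_true, if_true]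
          have : ∀ m ∈ Finset.range n,
              ((if m = 0 then 1 else 0) + (if m = 2 then 1 else 0)) * 10 ^ m
              = (if m = 0 then 1 else 0) * 10 ^ m + (if m = 2 then 1 else 0) * 10 ^ m := by
            intro m _; ring
          rw [Finset.sum_congr rfl this, Finset.sum_add_distrib,
            cfz_sum_single n 0 1 (by omega), cfz_sum_single n 2 1 (by omega)]
          norm_num
        · simp only [hd0, hd1, if_false]
          rw [cfz_sum_single n 0 d (by omega)]; ring
    · simp only [cfzE, cfzP, h0, h1, if_false]
      have : ∀ m ∈ Finset.range n,
          ((if m = n - 2 - i then 1 else 0) + (if m = n - 1 - i then d else 0)) * 10 ^ m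
          = (if m = n - 2 - i then 1 else 0) * 10 ^ m
            + (if m = n - 1 - i then d else 0) * 10 ^ m := by
        intro m _; ring
      rw [Finset.sum_congr rfl this, Finset.sum_add_distrib,
        cfz_sum_single n (n-2-i) 1 (by omega), cfz_sum_single n (n-1-i) d (by omega)]
      have e1 : n - 1 - i = (n - i - 2) + 1 := by omega
      have e2 : n - 2 - i = n - i - 2 := by omega
      rw [e1, e2, pow_succ]
      ring

lemma cfzE_lt {n i d : ℕ} (hn : 3 ≤ n) (hi : i < n) (hd : d ≤ 9) : cfzE n i d < 10 ^ n := by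
  rw [cfzE_eq_sum hn hi hd]
  exact cfz_sum_digits_lt n _ (cfzP_lt hn hi hd)


set_option maxHeartbeats 1600000 in
lemma cfzE_ne {n i j d d' : ℕ} (hn : 3 ≤ n) (hij : i < j) (hj : j < n)
    (hd : d ≤ 9) (hd' : d' ≤ 9) : cfzE n i d ≠ cfzE n j d' := by
  intro h
  rw [cfzE_eq_sum hn (by omega) hd, cfzE_eq_sum hn hj hd'] at h
  have H := cfz_sum_digits_inj n _ _ (cfzP_lt hn (by omega) hd) (cfzP_lt hn hj hd') h
  by_cases hi0 : i = 0
  · by_cases hjn : j = n - 1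
    · by_cases hd0 : d' = 0
      · have H2 := H (n-2) (by omega)
        simp only [cfzP, hi0, hjn, hd0] at H2
        split_ifs at H2 <;> first | omega | assumption | exact False.elim (by assumption)
      · have H0 := H 0 (by omega)
        simp only [cfzP, hi0, hjn] at H0
        split_ifs at H0 <;> first | omega | assumption | exact False.elim (by assumption)
    · have H2 := H (n-2-j) (by omega)
      simp only [cfzP, hi0] at H2
      split_ifs at H2 <;> first | omega | assumption | exact False.elim (by assumption)
  · have hjle : j ≤ n - 1 := by omega
    by_cases hjn : j = n - 1
    · -- i is a middle index: 1 ≤ i ≤ n - 2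
      by_cases hd0 : d' = 0
      · by_cases hi1 : i = 1
        · have H3 := H (n-3) (by omega)
          simp only [cfzP, hi0, hjn, hd0, hi1] at H3
          split_ifs at H3 <;> first | omega | assumption | exact False.elim (by assumption)
        · have H2 := H (n-2) (by omega)
          simp only [cfzP, hi0, hjn, hd0] at H2
          split_ifs at H2 <;> first | omega | assumption | exact False.elim (by assumption)
      · by_cases hd1 : d' = 1
        · by_cases hi2 : i = n - 2
          · have H2 := H 2 (by omega)
            simp only [cfzP, hi0, hjn, hd0, hd1, hi2] at H2
            split_ifs at H2 <;> first | omega | assumption | exact False.elim (by assumption)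
          · have H0 := H 0 (by omega)
            simp only [cfzP, hi0, hjn, hd0, hd1] at H0
            split_ifs at H0 <;> first | omega | assumption | exact False.elim (by assumption)
        · have H0 := H 0 (by omega)
          simp only [cfzP, hi0, hjn, hd0, hd1] at H0
          split_ifs at H0 <;> first | omega | assumption | exact False.elim (by assumption)
    · have H2 := H (n-2-j) (by omega)
      simp only [cfzP, hi0] at H2
      split_ifs at H2 <;> first | omega | assumption | exact False.elim (by assumption)

set_option maxHeartbeats 1600000 in
lemma cfzE_inj {n i d d' : ℕ} (hn : 3 ≤ n) (hi : i < n) (hd : d ≤ 9) (hd' : d' ≤ 9)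
    (h : cfzE n i d = cfzE n i d') : d = d' := by
  rw [cfzE_eq_sum hn hi hd, cfzE_eq_sum hn hi hd'] at h
  have H := cfz_sum_digits_inj n _ _ (cfzP_lt hn hi hd) (cfzP_lt hn hi hd') h
  by_cases hi0 : i = 0
  · have H1 := H (n-1) (by omega)
    simp only [cfzP, hi0] at H1
    split_ifs at H1 <;> first | omega | assumption | exact False.elim (by assumption)
  · by_cases hin : i = n - 1
    · have H0 := H 0 (by omega)
      have H2 := H (n-2) (by omega)
      simp only [cfzP, hi0, hin] at H0 H2
      split_ifs at H0 H2 <;> first | omega | assumption | exact False.elim (by assumption)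
    · have H1 := H (n-1-i) (by omega)
      simp only [cfzP, hi0, hin] at H1
      split_ifs at H1 <;> first | omega | assumption | exact False.elim (by assumption)


def cfzCC {n : ℕ} (c : Fin n → Fin 10) (i : ℕ) : ℕ :=
  if h : i < n then (c ⟨i, h⟩).val else 0

def cfzS1 (n : ℕ) (c : Fin n → Fin 10) : ℕ :=
  ∑ i ∈ Finset.range n, if i = n - 1 then 0 else cfzCC c i * 10 ^ (n - 1 - i)

def cfzS2 (n : ℕ) : ℕ :=
  ∑ i ∈ Finset.range n, if 1 ≤ i ∧ i ≤ n - 2 then 10 ^ (n - i - 2) else 0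

def cfzN (n : ℕ) (c : Fin n → Fin 10) : ℕ := ∑ i ∈ Finset.range n, cfzE n i (cfzCC c i)

lemma cfzCC_le {n : ℕ} (c : Fin n → Fin 10) (i : ℕ) : cfzCC c i ≤ 9 := by
  unfold cfzCC
  split
  · exact Fin.is_le _
  · omega

lemma cfzN_split {n : ℕ} (hn : 3 ≤ n) (c : Fin n → Fin 10) :
    cfzN n c = cfzS1 n c + (cfzS2 n + cfzT n (cfzCC c (n - 1))) := by
  unfold cfzN cfzS1 cfzS2
  have hterm : ∀ i ∈ Finset.range n, cfzE n i (cfzCC c i)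
      = (if i = n - 1 then 0 else cfzCC c i * 10 ^ (n - 1 - i))
        + ((if 1 ≤ i ∧ i ≤ n - 2 then 10 ^ (n - i - 2) else 0)
          + (if i = n - 1 then cfzT n (cfzCC c (n - 1)) else 0)) := by
    intro i hi
    rw [Finset.mem_range] at hi
    by_cases h0 : i = 0
    · subst h0
      simp only [cfzE, eq_self_iff_true, if_true]
      rw [if_neg (by omega), if_neg (by omega), if_neg (by omega), Nat.sub_zero]
      ring
    · by_cases h1 : i = n - 1
      · subst h1
        simp only [cfzE, h0, if_false, eq_self_iff_true, if_true]
        rw [if_neg (by omega)]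
        simp
      · simp only [cfzE, h0, h1, if_false]
        rw [if_pos (by omega : 1 ≤ i ∧ i ≤ n - 2)]
        have e1 : n - 1 - i = (n - i - 2) + 1 := by omega
        rw [e1, pow_succ]
        ring
  rw [Finset.sum_congr rfl hterm, Finset.sum_add_distrib, Finset.sum_add_distrib]
  congr 1
  congr 1
  rw [Finset.sum_ite_eq' (Finset.range n) (n - 1) (fun _ => cfzT n (cfzCC c (n - 1))),
    if_pos (Finset.mem_range.2 (by omega))]

lemma cfzS1_dvd {n : ℕ} (hn : 3 ≤ n) (c : Fin n → Fin 10) : 10 ∣ cfzS1 n c := by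
  refine Finset.dvd_sum fun i hi => ?_
  rw [Finset.mem_range] at hi
  split_ifs with h
  · exact dvd_zero _
  · exact Dvd.dvd.mul_left (dvd_pow_self 10 (by omega : n - 1 - i ≠ 0)) _

lemma cfzS2_mod {n : ℕ} (hn : 3 ≤ n) : cfzS2 n % 10 = 1 := by
  unfold cfzS2
  have hmem : n - 2 ∈ Finset.range n := Finset.mem_range.2 (by omega)
  rw [← Finset.sum_erase_add _ _ hmem]
  rw [if_pos (by omega : 1 ≤ n - 2 ∧ n - 2 ≤ n - 2)]
  rw [show n - (n - 2) - 2 = 0 from by omega, pow_zero]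
  have h2 : 10 ∣ ∑ i ∈ (Finset.range n).erase (n - 2),
      (if 1 ≤ i ∧ i ≤ n - 2 then 10 ^ (n - i - 2) else 0) := by
    refine Finset.dvd_sum fun i hi => ?_
    rw [Finset.mem_erase, Finset.mem_range] at hi
    split_ifs with hc
    · exact dvd_pow_self 10 (by omega : n - i - 2 ≠ 0)
    · exact dvd_zero _
  omega

lemma cfzT_mod {n : ℕ} (hn : 3 ≤ n) {d : ℕ} (hd : d ≤ 9) : cfzT n d % 10 = d := by
  unfold cfzT
  split_ifs with h1 h2
  · have := dvd_pow_self 10 (by omega : n - 2 ≠ 0)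
    omega
  · omega
  · omega

lemma cfzS1_digits {n : ℕ} (hn : 3 ≤ n) (c : Fin n → Fin 10) :
    cfzS1 n c = ∑ m ∈ Finset.range n, (if m = 0 then 0 else cfzCC c (n - 1 - m)) * 10 ^ m := by
  unfold cfzS1
  conv_rhs => rw [← Finset.sum_range_reflect
    (fun m => (if m = 0 then 0 else cfzCC c (n - 1 - m)) * 10 ^ m) n]
  refine Finset.sum_congr rfl fun i hi => ?_
  rw [Finset.mem_range] at hi
  by_cases h : i = n - 1
  · subst h
    rw [if_pos rfl, if_pos (by omega : n - 1 - (n - 1) = 0)]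
    ring
  · rw [if_neg h, if_neg (by omega : ¬(n - 1 - i = 0)),
      show n - 1 - (n - 1 - i) = i from by omega]

lemma cfzS1_lt {n : ℕ} (hn : 3 ≤ n) (c : Fin n → Fin 10) : cfzS1 n c < 10 ^ n := by
  rw [cfzS1_digits hn c]
  refine cfz_sum_digits_lt n _ fun m => ?_
  split_ifs
  · omega
  · have := cfzCC_le c (n - 1 - m); omega

lemma cfzN_cast {n : ℕ} (c : Fin n → Fin 10) :
    (∑ i : Fin n, ((cfzE n i.val (c i).val : ℕ) : ZMod (10 ^ n)))
      = ((cfzN n c : ℕ) : ZMod (10 ^ n)) := by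
  unfold cfzN
  rw [Nat.cast_sum,
    ← Fin.sum_univ_eq_sum_range (fun i => ((cfzE n i (cfzCC c i) : ℕ) : ZMod (10 ^ n))) n]
  refine Finset.sum_congr rfl fun i _ => ?_
  have h : cfzCC c i.val = (c i).val := by simp [cfzCC, i.isLt]
  rw [h]


lemma cfz_key {n : ℕ} (hn : 3 ≤ n) : Function.Injective
    (fun c : Fin n → Fin 10 =>
      ∑ i : Fin n, ((cfzE n i.val (c i).val : ℕ) : ZMod (10 ^ n))) := by
  haveI : NeZero (10 ^ n) := ⟨by positivity⟩
  intro c c' h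
  simp only at h
  rw [cfzN_cast c, cfzN_cast c'] at h
  have hmod : cfzN n c % 10 ^ n = cfzN n c' % 10 ^ n :=
    (ZMod.natCast_eq_natCast_iff _ _ _).1 h
  have hm10 : cfzN n c % 10 = cfzN n c' % 10 := by
    have h1 : cfzN n c % 10 = cfzN n c % 10 ^ n % 10 :=
      (Nat.mod_mod_of_dvd _ (dvd_pow_self 10 (by omega : n ≠ 0))).symm
    have h2 : cfzN n c' % 10 = cfzN n c' % 10 ^ n % 10 :=
      (Nat.mod_mod_of_dvd _ (dvd_pow_self 10 (by omega : n ≠ 0))).symm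
    rw [h1, h2, hmod]
  -- Step A: last coordinate agrees
  have hlast : cfzCC c (n - 1) = cfzCC c' (n - 1) := by
    have e1 := cfzN_split hn c
    have e2 := cfzN_split hn c'
    have d1 := cfzS1_dvd hn c
    have d2 := cfzS1_dvd hn c'
    have m2 := cfzS2_mod hn
    have t1 := cfzT_mod hn (cfzCC_le c (n - 1))
    have t2 := cfzT_mod hn (cfzCC_le c' (n - 1))
    have b1 := cfzCC_le c (n - 1)
    have b2 := cfzCC_le c' (n - 1)
    omega
  -- Step B: remaining coordinates agree
  have hS1 : cfzS1 n c = cfzS1 n c' := by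
    have h1 : cfzS1 n c % 10 ^ n = cfzS1 n c' % 10 ^ n := by
      have hm := hmod
      rw [cfzN_split hn c, cfzN_split hn c', hlast] at hm
      exact Nat.ModEq.add_right_cancel' _ hm
    rwa [Nat.mod_eq_of_lt (cfzS1_lt hn c), Nat.mod_eq_of_lt (cfzS1_lt hn c')] at h1
  rw [cfzS1_digits hn c, cfzS1_digits hn c'] at hS1
  have HD := cfz_sum_digits_inj n _ _
    (fun m => by have := cfzCC_le c (n - 1 - m); split_ifs <;> omega)
    (fun m => by have := cfzCC_le c' (n - 1 - m); split_ifs <;> omega) hS1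
  funext i
  refine Fin.ext ?_
  have hcc : cfzCC c i.val = cfzCC c' i.val := by
    by_cases hiv : i.val = n - 1
    · rw [hiv]; exact hlast
    · have hmlt : n - 1 - i.val < n := by omega
      have H := HD (n - 1 - i.val) hmlt
      rw [if_neg (by omega : ¬(n - 1 - i.val = 0)),
        if_neg (by omega : ¬(n - 1 - i.val = 0)),
        show n - 1 - (n - 1 - i.val) = i.val from by omega] at H
      exact H
  simpa [cfzCC, i.isLt] using hcc

set_option maxHeartbeats 1600000 in
/-- Let `n ≥ 3` and `G = ℤ/10^nℤ`.  The sets `A_1 = 10^(n-1)·{0,1,…,9}`,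
`A_i = 10^(n-i-1)·{1,11,21,…,91}` for `i = 2, …, n-1`, and
`A_n = {10^(n-2), 101, 2, 3, …, 9}` form a complete factorization of `G`, with `|A_i| = 10`
for all `i`. -/
theorem complete_factorization_zmod_ten_pow {n : ℕ} (hn : 3 ≤ n)
    (A : ℕ → Set (ZMod (10 ^ n)))
    (hA1 : A 1 = {x : ZMod (10 ^ n) | ∃ s : ℕ, s ≤ 9 ∧ x = (10 : ZMod (10 ^ n)) ^ (n - 1) * s})
    (hAi : ∀ (i : ℕ) (_h1 : 2 ≤ i) (_h2 : i ≤ n - 1),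
      A i = {x : ZMod (10 ^ n) | ∃ j : ℕ, j ≤ 9 ∧
        x = (10 : ZMod (10 ^ n)) ^ (n - i - 1) * (10 * j + 1)})
    (hAn : A n = ({(10 : ZMod (10 ^ n)) ^ (n - 2), 101, 2, 3, 4, 5, 6, 7, 8, 9} :
      Set (ZMod (10 ^ n)))) :
    IsCompleteFactorizationAdd (fun i : Fin n => A (i.val + 1)) ∧
      ∀ i, 1 ≤ i → i ≤ n → (A i).ncard = 10 := by
  haveI : NeZero (10 ^ n) := ⟨by positivity⟩
  -- injectivity of the natural cast below `10 ^ n`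
  have hcast : ∀ a b : ℕ, a < 10 ^ n → b < 10 ^ n →
      ((a : ZMod (10 ^ n)) = (b : ZMod (10 ^ n))) → a = b := by
    intro a b ha hb h
    have h2 := congrArg ZMod.val h
    rwa [ZMod.val_natCast_of_lt ha, ZMod.val_natCast_of_lt hb] at h2
  -- each set is the range of the corresponding enumeration
  have hA_eq : ∀ i : Fin n, A (i.val + 1)
      = Set.range (fun d : Fin 10 => ((cfzE n i.val d.val : ℕ) : ZMod (10 ^ n))) := by
    intro i
    rcases Nat.lt_or_ge i.val 1 with h0 | h1
    · have hi0 : i.val = 0 := by omega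
      rw [hi0]
      rw [hA1]
      ext x
      simp only [Set.mem_setOf_eq, Set.mem_range]
      constructor
      · rintro ⟨s, hs, rfl⟩
        refine ⟨⟨s, by omega⟩, ?_⟩
        simp only [cfzE, eq_self_iff_true, if_true]
        push_cast
        ring
      · rintro ⟨d, rfl⟩
        refine ⟨d.val, Fin.is_le d, ?_⟩
        simp only [cfzE, eq_self_iff_true, if_true]
        push_cast
        ring
    · rcases Nat.lt_or_ge i.val (n - 1) with h2 | h3
      · rw [hAi (i.val + 1) (by omega) (by omega)]
        have hne0 : i.val ≠ 0 := by omega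
        have hnen : i.val ≠ n - 1 := by omega
        have hexp : n - (i.val + 1) - 1 = n - i.val - 2 := by omega
        ext x
        simp only [Set.mem_setOf_eq, Set.mem_range]
        constructor
        · rintro ⟨j, hj, rfl⟩
          refine ⟨⟨j, by omega⟩, ?_⟩
          simp only [cfzE, hne0, hnen, if_false]
          rw [hexp]
          push_cast
          ring
        · rintro ⟨d, rfl⟩
          refine ⟨d.val, Fin.is_le d, ?_⟩
          simp only [cfzE, hne0, hnen, if_false]
          rw [hexp]
          push_cast
          ring
      · have hival : i.val = n - 1 := by omega
        have hione : i.val + 1 = n := by omega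
        rw [hione, hAn]
        have hne0 : ¬(n - 1 = 0) := by omega
        have hv : ∀ d : Fin 10, ((cfzE n i.val d.val : ℕ) : ZMod (10 ^ n))
            = (if d.val = 0 then (10 : ZMod (10 ^ n)) ^ (n - 2)
               else if d.val = 1 then 101 else (d.val : ZMod (10 ^ n))) := by
          intro d
          rw [hival]
          simp only [cfzE, cfzT, hne0, if_false, eq_self_iff_true, if_true]
          split_ifs with e0 e1
          · push_cast; ring
          · norm_num
          · rfl
        ext x
        simp only [Set.mem_insert_iff, Set.mem_singleton_iff, Set.mem_range]
        constructor
        · rintro (rfl | rfl | rfl | rfl | rfl | rfl | rfl | rfl | rfl | rfl)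
          · exact ⟨0, by rw [hv 0]; norm_num⟩
          · exact ⟨1, by rw [hv 1]; norm_num⟩
          · exact ⟨2, by rw [hv 2]; norm_num [show ((2:Fin 10):ℕ) = 2 from rfl]⟩
          · exact ⟨3, by rw [hv 3]; norm_num [show ((3:Fin 10):ℕ) = 3 from rfl]⟩
          · exact ⟨4, by rw [hv 4]; norm_num [show ((4:Fin 10):ℕ) = 4 from rfl]⟩
          · exact ⟨5, by rw [hv 5]; norm_num [show ((5:Fin 10):ℕ) = 5 from rfl]⟩
          · exact ⟨6, by rw [hv 6]; norm_num [show ((6:Fin 10):ℕ) = 6 from rfl]⟩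
          · exact ⟨7, by rw [hv 7]; norm_num [show ((7:Fin 10):ℕ) = 7 from rfl]⟩
          · exact ⟨8, by rw [hv 8]; norm_num [show ((8:Fin 10):ℕ) = 8 from rfl]⟩
          · exact ⟨9, by rw [hv 9]; norm_num [show ((9:Fin 10):ℕ) = 9 from rfl]⟩
        · rintro ⟨d, rfl⟩
          rw [hv d]
          fin_cases d <;> norm_num
  have hinj := cfz_key hn
  have hbij : Function.Bijective
      (fun c : Fin n → Fin 10 =>
        ∑ i : Fin n, ((cfzE n i.val (c i).val : ℕ) : ZMod (10 ^ n))) := by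
    rw [Fintype.bijective_iff_injective_and_card]
    exact ⟨hinj, by simp [ZMod.card]⟩
  constructor
  · constructor
    · -- pairwise disjoint
      intro i j hij
      show Disjoint (A (i.val + 1)) (A (j.val + 1))
      rw [hA_eq i, hA_eq j, Set.disjoint_left]
      intro x hx hx'
      obtain ⟨d, rfl⟩ := Set.mem_range.1 hx
      obtain ⟨d', hd'⟩ := Set.mem_range.1 hx'
      have hnat : cfzE n j.val d'.val = cfzE n i.val d.val :=
        hcast _ _ (cfzE_lt hn j.isLt (Fin.is_le d')) (cfzE_lt hn i.isLt (Fin.is_le d)) hd'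
      rcases lt_trichotomy i.val j.val with hlt | heq | hgt
      · exact cfzE_ne hn hlt j.isLt (Fin.is_le d) (Fin.is_le d') hnat.symm
      · exact hij (Fin.ext heq)
      · exact cfzE_ne hn hgt i.isLt (Fin.is_le d') (Fin.is_le d) hnat
    · -- unique representation
      intro g
      obtain ⟨c, hc⟩ := hbij.surjective g
      refine ⟨fun i => ((cfzE n i.val (c i).val : ℕ) : ZMod (10 ^ n)),
        ⟨fun i => ?_, hc⟩, ?_⟩
      · show ((cfzE n i.val (c i).val : ℕ) : ZMod (10 ^ n)) ∈ A (i.val + 1)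
        rw [hA_eq i]; exact ⟨c i, rfl⟩
      · rintro f' ⟨hmem, hsum⟩
        have hch : ∀ i : Fin n, ∃ d : Fin 10,
            ((cfzE n i.val d.val : ℕ) : ZMod (10 ^ n)) = f' i := by
          intro i
          have hmi : f' i ∈ A (i.val + 1) := hmem i
          rw [hA_eq i] at hmi
          exact Set.mem_range.1 hmi
        choose c' hc' using hch
        have hc'sum : ∑ i : Fin n, ((cfzE n i.val (c' i).val : ℕ) : ZMod (10 ^ n)) = g := by
          rw [Finset.sum_congr rfl (fun i _ => hc' i)]
          exact hsum
        have hcc : c' = c := hinj (hc'sum.trans hc.symm)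
        funext i
        rw [← hc' i, hcc]
  · -- cardinalities
    intro i h1 h2
    have hlt : i - 1 < n := by omega
    have hrange := hA_eq ⟨i - 1, hlt⟩
    simp only at hrange
    rw [show i = i - 1 + 1 from by omega, hrange]
    have hinj10 : Function.Injective
        (fun d : Fin 10 => ((cfzE n (i - 1) d.val : ℕ) : ZMod (10 ^ n))) := by
      intro a b hab
      have h3 := hcast _ _ (cfzE_lt hn hlt (Fin.is_le a)) (cfzE_lt hn hlt (Fin.is_le b)) hab
      exact Fin.ext (cfzE_inj hn hlt (Fin.is_le a) (Fin.is_le b) h3)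
    rw [← Nat.card_coe_set_eq, Nat.card_range_of_injective hinj10]
    simp
end

section
/- Let G be a finite p-group (p a prime) and suppose |G| = m_1 · m_2 · ⋯ · m_k, where k ≥ 3 and each m_i is an integer greater than 1. Then there exist subsets A_1, …, A_k of G that form a complete factorization of G with |A_i| = m_i for all i = 1, …, k. -/
open Function
open scoped Pointwise RightActions

section

variable {G : Type*} [Group G]

def IsFactorization {n : ℕ} (A : Fin n → Set G) (X : Set G) : Prop :=
  Set.BijOn (fun f : Fin n → G => (List.ofFn f).prod) (Set.univ.pi A) X

theorem IsFactorization.isCompleteFactorization {n : ℕ} {A : Fin n → Set G}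
    (hA : IsFactorization A Set.univ) (hd : Pairwise (Disjoint on A)) :
    IsCompleteFactorization A := by
  refine ⟨fun i j hij => hd hij, fun g => ?_⟩
  obtain ⟨f, hf, rfl⟩ := hA.surjOn (Set.mem_univ g)
  exact ⟨f, ⟨fun i => hf i trivial, rfl⟩,
    fun f' ⟨hf', hprod⟩ => hA.injOn (fun i _ => hf' i) hf hprod⟩

theorem IsFactorization.cons {n : ℕ} {S X Y : Set G} {A : Fin n → Set G}
    (hA : IsFactorization A X) (hSX : Set.BijOn (fun x : G × G => x.1 * x.2) (S ×ˢ X) Y) :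
    IsFactorization (Fin.cons S A : Fin (n + 1) → Set G) Y := by
  have he : Set.BijOn (Fin.consEquiv fun _ => G).symm (Set.univ.pi (Fin.cons S A))
      (S ×ˢ Set.univ.pi A) :=
    (Fin.consEquiv fun _ => G).symm.bijOn'
      (fun f hf => by simpa [Fin.forall_fin_succ, Fin.tail] using hf)
      (fun x hx => by simpa [Fin.forall_fin_succ] using hx)
  unfold IsFactorization
  convert (hSX.comp ((Set.bijOn_id S).prodMap hA)).comp he using 1
  funext f
  simp only [Fin.consEquiv, Equiv.symm_mk, Equiv.coe_fn_mk, comp_apply, List.ofFn_succ,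
    List.prod_cons, id_eq]
  rfl

theorem IsFactorization.twist {n : ℕ} {S S' Y : Set G} {A : Fin n → Set G}
    (h : IsFactorization (Fin.cons S (Fin.cons S' A) : Fin (n + 2) → Set G) Y) (v : G) :
    IsFactorization (Fin.cons (S <• v) (Fin.cons (v⁻¹ • S') A) : Fin (n + 2) → Set G) Y := by
  let e : G → (Fin (n + 2) → G) → Fin (n + 2) → G := fun w f =>
    Fin.cons (f 0 * w) (Fin.cons (w⁻¹ * f 1) fun i => f i.succ.succ)
  have he : Set.BijOn (e v⁻¹) (Set.univ.pi (Fin.cons (S <• v) (Fin.cons (v⁻¹ • S') A)))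
      (Set.univ.pi (Fin.cons S (Fin.cons S' A))) := by
    have hinv : ∀ w f, e w⁻¹ (e w f) = f := fun w f => by
      ext i
      refine Fin.cases (by simp [e]) (fun j => Fin.cases (by simp [e]) (fun k => by simp [e]) j) i
    refine Set.InvOn.bijOn (f' := e v) ⟨fun f _ => by simpa using hinv v⁻¹ f, fun f _ => hinv v f⟩
      (fun f hf => ?_) (fun f hf => ?_)
    · simp only [Set.mem_univ_pi, Fin.forall_fin_succ, Fin.cons_zero, Fin.cons_succ,
        Set.mem_smul_set, smul_eq_mul, MulOpposite.smul_eq_mul_unop, MulOpposite.unop_op] at hf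
      obtain ⟨⟨x, hx, hx0⟩, ⟨y, hy, hy1⟩, hA⟩ := hf
      rw [Fin.succ_zero_eq_one] at hy1
      simpa [e, Fin.forall_fin_succ, ← hx0, ← hy1] using ⟨hx, hy, hA⟩
    · simp only [e, Set.mem_univ_pi, Fin.forall_fin_succ, Fin.cons_zero, Fin.cons_succ] at hf ⊢
      exact ⟨Set.smul_mem_smul_set hf.1, Set.smul_mem_smul_set hf.2.1, hf.2.2⟩
  unfold IsFactorization at h ⊢
  convert h.comp he using 1
  funext f
  simp [e, List.ofFn_succ, mul_assoc]

theorem pairwise_disjoint_fin_cons {α : Type*} {n : ℕ} {X : Set α} {C : Fin n → Set α}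
    (hX : ∀ i, Disjoint X (C i)) (hC : Pairwise (Disjoint on C)) :
    Pairwise (Disjoint on (Fin.cons X C : Fin (n + 1) → Set α)) := by
  intro i j hij
  cases i using Fin.cases <;> cases j using Fin.cases
  · exact absurd rfl hij
  · exact hX _
  · exact (hX _).symm
  · exact hC (fun h => hij (congrArg Fin.succ h))

theorem ncard_mul_card_of_bijOn_mul {T : Set G} {K H : Subgroup G}
    (hT : Set.BijOn (fun x : G × G => x.1 * x.2) (T ×ˢ K) H) :
    T.ncard * Nat.card K = Nat.card H := by
  have h := hT.ncard_eq
  rwa [Set.ncard_prod, ← Nat.card_coe_set_eq (K : Set G), ← Nat.card_coe_set_eq (H : Set G),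
    SetLike.coe_sort_coe, SetLike.coe_sort_coe] at h

theorem exists_transversal_disjoint {K H : Subgroup G} (hKH : K ≤ H) {B : Set G}
    (hB : ∀ g ∈ H, ∃ x ∈ g • (K : Set G), x ∉ B) :
    ∃ T ⊆ (H : Set G), Disjoint T B ∧
      Set.BijOn (fun x : G × G => x.1 * x.2) (T ×ˢ K) H := by
  have hrep : ∀ q : G ⧸ K, ∃ x : G, (x : G ⧸ K) = q ∧
      ∀ g ∈ H, (g : G ⧸ K) = q → x ∈ H ∧ x ∉ B := by
    intro q
    by_cases hq : ∃ g ∈ H, (g : G ⧸ K) = q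
    · obtain ⟨g, hg, rfl⟩ := hq
      obtain ⟨x, hx, hxB⟩ := hB g hg
      rw [mem_leftCoset_iff] at hx
      have hxH : x ∈ H := by simpa using H.mul_mem hg (hKH hx)
      exact ⟨x, (QuotientGroup.eq.mpr hx).symm, fun _ _ _ => ⟨hxH, hxB⟩⟩
    · push Not at hq
      exact ⟨q.out, q.out_eq, fun g hg hgq => absurd hgq (hq g hg)⟩
  choose r hr hrHB using hrep
  refine ⟨(fun g : G => r g) '' H, ?_, ?_, ?_, ?_, ?_⟩
  · rintro _ ⟨g, hg, rfl⟩
    exact (hrHB _ g hg rfl).1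
  · rw [Set.disjoint_left]
    rintro _ ⟨g, hg, rfl⟩
    exact (hrHB _ g hg rfl).2
  · rintro ⟨_, k⟩ ⟨⟨g, hg, rfl⟩, hk⟩
    exact H.mul_mem (hrHB _ g hg rfl).1 (hKH hk)
  · rintro ⟨_, k⟩ ⟨⟨g, hg, rfl⟩, hk⟩ ⟨_, k'⟩ ⟨⟨g', hg', rfl⟩, hk'⟩ h
    simp only at h hk hk' ⊢
    have hq : (g : G ⧸ K) = g' := by
      simpa only [QuotientGroup.mk_mul_of_mem _ hk, QuotientGroup.mk_mul_of_mem _ hk', hr]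
        using congrArg (QuotientGroup.mk (s := K)) h
    rw [hq] at h ⊢
    rw [mul_left_cancel h]
  · intro g hg
    exact ⟨(r g, (r g)⁻¹ * g), ⟨⟨g, hg, rfl⟩, QuotientGroup.eq.mp (hr _)⟩, by simp⟩

theorem exists_mem_leftCoset_mul_notMem [Finite G] {K : Subgroup G} {v : G}
    (hvN : v ∈ Subgroup.normalizer (K : Set G)) (hvK : v ∉ K) {S R : Set G} (hS : S ⊆ K)
    (hSK : S.ncard < Nat.card K) (hR : R ⊆ K) (hR1 : (1 : G) ∉ R) (g : G) :
    ∃ x ∈ g • (K : Set G), x * v ∉ v⁻¹ • S ∪ R := by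
  by_cases hg : v⁻¹ ∈ g • (K : Set G)
  · refine ⟨v⁻¹, hg, ?_⟩
    simpa [Set.mem_smul_set_iff_inv_smul_mem] using ⟨fun hv => hvK (hS hv), hR1⟩
  by_contra! hall
  have hsub : g • (K : Set G) ⊆ (v⁻¹ • S) <• v⁻¹ := by
    intro x hx
    rcases hall x hx with h | h
    · exact ⟨x * v, h, by simp⟩
    · refine absurd ?_ hg
      rw [mem_leftCoset_iff] at hx ⊢
      have hvx : v * x ∈ K := by
        simpa [mul_assoc] using (Subgroup.mem_normalizer_iff.mp hvN _).mp (hR h)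
      simpa [mul_assoc] using K.mul_mem hx (K.inv_mem hvx)
  have := Set.ncard_le_ncard hsub
  rw [Set.ncard_smul_set, Set.ncard_smul_set, Set.ncard_smul_set, ← Nat.card_coe_set_eq] at this
  exact absurd this (not_le.mpr hSK)

structure IsTailDisjointFactorization {n : ℕ} (A : Fin (n + 1) → Set G) (H : Subgroup G) :
    Prop where
  isFactorization : IsFactorization A H
  subset : ∀ i, A i ⊆ H
  pairwise_disjoint_tail : Pairwise (Disjoint on Fin.tail A)
  one_notMem_tail : ∀ i, (1 : G) ∉ Fin.tail A i

def twistCons {n : ℕ} (T : Set G) (v : G) (A : Fin (n + 1) → Set G) : Fin (n + 2) → Set G :=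
  Fin.cons (T <• v) (Fin.cons (v⁻¹ • A 0) (Fin.tail A))

theorem ncard_twistCons_zero {n : ℕ} (T : Set G) (v : G) (A : Fin (n + 1) → Set G) :
    (twistCons T v A 0).ncard = T.ncard :=
  Set.ncard_smul_set _ _

theorem ncard_twistCons_succ {n : ℕ} (T : Set G) (v : G) (A : Fin (n + 1) → Set G)
    (i : Fin (n + 1)) : (twistCons T v A i.succ).ncard = (A i).ncard := by
  cases i using Fin.cases <;> simp [twistCons, Set.ncard_smul_set, Fin.tail]

theorem isTailDisjointFactorization_twistCons {n : ℕ} {K H : Subgroup G}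
    {A : Fin (n + 1) → Set G} (hA : IsTailDisjointFactorization A K) (hKH : K ≤ H) {v : G}
    (hvH : v ∈ H) (hvK : v ∉ K) {T : Set G} (hTH : T ⊆ H)
    (hT : Set.BijOn (fun x : G × G => x.1 * x.2) (T ×ˢ K) H) :
    IsTailDisjointFactorization (twistCons T v A) H := by
  have hA' := hA.isFactorization
  rw [← Fin.cons_self_tail A] at hA'
  have hvA0 : ∀ a ∈ A 0, v⁻¹ * a ∉ K := fun a ha h =>
    hvK (by simpa using K.mul_mem (hA.subset 0 ha) (K.inv_mem h))
  have hsub : ∀ i, twistCons T v A i ⊆ H := by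
    intro i
    refine Fin.cases ?_ (fun j => Fin.cases ?_ (fun i => ?_) j) i
    · rintro _ ⟨t, ht, rfl⟩
      exact H.mul_mem (hTH ht) hvH
    · rintro _ ⟨a, ha, rfl⟩
      exact H.mul_mem (H.inv_mem hvH) (hKH (hA.subset 0 ha))
    · exact (hA.subset i.succ).trans hKH
  refine ⟨(hA'.cons hT).twist v, hsub, ?_, ?_⟩
  · refine pairwise_disjoint_fin_cons (fun i => Set.disjoint_left.mpr ?_)
      hA.pairwise_disjoint_tail
    rintro _ ⟨a, ha, rfl⟩ hai
    exact hvA0 a ha (hA.subset i.succ hai)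
  · refine Fin.cases ?_ hA.one_notMem_tail
    rintro ⟨a, ha, hva⟩
    exact hvA0 a ha ((congrArg (· ∈ K) hva).mpr K.one_mem)

theorem IsTailDisjointFactorization.exists_isCompleteFactorization [Finite G] {n : ℕ}
    {K : Subgroup G} {A : Fin (n + 1) → Set G} (hA : IsTailDisjointFactorization A K) {v : G}
    (hvN : v ∈ Subgroup.normalizer (K : Set G)) (hvK : v ∉ K) (hA0 : (A 0).ncard < Nat.card K) :
    ∃ T : Set G, T.ncard * Nat.card K = Nat.card G ∧
      IsCompleteFactorization (twistCons T v A) := by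
  obtain ⟨T, -, hTB, hT⟩ := exists_transversal_disjoint le_top
    (B := {x | x * v ∈ v⁻¹ • A 0 ∪ ⋃ i, Fin.tail A i}) fun g _ =>
      exists_mem_leftCoset_mul_notMem hvN hvK (hA.subset 0) hA0
        (Set.iUnion_subset fun i : Fin n => hA.subset i.succ)
        (by simpa [Fin.tail] using hA.one_notMem_tail) g
  have hB := isTailDisjointFactorization_twistCons hA le_top (Subgroup.mem_top v) hvK
    (Set.subset_univ T) hT
  refine ⟨T, by simpa using ncard_mul_card_of_bijOn_mul hT,
    hB.isFactorization.isCompleteFactorization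
      (pairwise_disjoint_fin_cons ?_ hB.pairwise_disjoint_tail)⟩
  intro i
  rw [Set.disjoint_left]
  rintro _ ⟨t, ht, rfl⟩ hti
  refine Set.disjoint_left.mp hTB ht ?_
  cases i using Fin.cases with
  | zero => exact Or.inl hti
  | succ j => exact Or.inr (Set.mem_iUnion.mpr ⟨j, hti⟩)

theorem IsPGroup.exists_subgroup_le_card_eq {p : ℕ} (hp : p.Prime) (hpG : IsPGroup p G)
    [Finite G] {H : Subgroup G} {d : ℕ} (hd : d ∣ Nat.card H) : ∃ K ≤ H, Nat.card K = d := by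
  have := Fact.mk hp
  obtain ⟨a, ha⟩ := (hpG.to_subgroup H).exists_card_eq
  obtain ⟨b, -, rfl⟩ := (Nat.dvd_prime_pow hp).mp (ha ▸ hd)
  exact Sylow.exists_subgroup_le_card_pow_prime_of_le_card hp hpG (Nat.le_of_dvd Nat.card_pos hd)

theorem exists_isTailDisjointFactorization [Finite G] {p : ℕ} (hp : p.Prime)
    (hpG : IsPGroup p G) {n : ℕ} (H : Subgroup G) (m : Fin (n + 1) → ℕ) (hm : ∀ i, 1 < m i)
    (hH : Nat.card H = ∏ i, m i) :
    ∃ A, IsTailDisjointFactorization A H ∧ ∀ i, (A i).ncard = m i := by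
  induction n generalizing H with
  | zero =>
    refine ⟨fun _ => H, ⟨?_, fun _ => le_rfl, fun i => i.elim0, fun i => i.elim0⟩, fun i => ?_⟩
    · refine ⟨fun f hf => by simpa using hf 0 trivial, fun f _ g _ h => funext fun i => ?_,
        fun x hx => ⟨fun _ => x, fun _ _ => hx, by simp⟩⟩
      obtain rfl := Fin.fin_one_eq_zero i
      simpa using h
    · obtain rfl := Fin.fin_one_eq_zero i
      simpa [← Nat.card_coe_set_eq] using hH
  | succ n ih =>
    rw [Fin.prod_univ_succ] at hH
    obtain ⟨K, hKH, hK⟩ := hpG.exists_subgroup_le_card_eq hp (Dvd.intro_left _ hH.symm)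
    obtain ⟨A, hA, hAcard⟩ := ih K (Fin.tail m) (fun i => hm _) hK
    have hKH' : Nat.card K < Nat.card H := by
      rw [hH, ← hK]
      exact lt_mul_left Nat.card_pos (hm 0)
    obtain ⟨v, hvH, hvK⟩ := SetLike.exists_of_lt (lt_of_le_of_ne hKH (by rintro rfl; omega))
    obtain ⟨T, hTH, -, hT⟩ := exists_transversal_disjoint hKH (B := ∅)
      fun g _ => ⟨g, mem_own_leftCoset _ g, id⟩
    refine ⟨twistCons T v A, isTailDisjointFactorization_twistCons hA hKH hvH hvK hTH hT,
      Fin.cases ?_ fun i => ?_⟩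
    · rw [ncard_twistCons_zero]
      have := ncard_mul_card_of_bijOn_mul hT
      rw [hH, ← hK] at this
      exact Nat.eq_of_mul_eq_mul_right Nat.card_pos this
    · rw [ncard_twistCons_succ, hAcard]
      rfl

end

/-- Let `G` be a finite `p`-group (`p` prime) and suppose `|G| = m_1 ⋯ m_k` where `k ≥ 3` and each
`m_i > 1`. Then there exist subsets `A_1, …, A_k` of `G` forming a complete factorization of `G`
with `|A_i| = m_i` for all `i`. -/
theorem complete_factorization_of_pGroup {G : Type*} [Group G] [Finite G]
    {p : ℕ} (hp : p.Prime) (hpG : IsPGroup p G)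
    {k : ℕ} (hk : 3 ≤ k) (m : Fin k → ℕ) (hm : ∀ i, 1 < m i)
    (hcard : Nat.card G = ∏ i, m i) :
    ∃ A : Fin k → Set G, IsCompleteFactorization A ∧ ∀ i, (A i).ncard = m i := by
  have := Fact.mk hp
  obtain ⟨n, rfl⟩ : ∃ n, k = n + 3 := ⟨k - 3, by omega⟩
  rw [Fin.prod_univ_succ] at hcard
  obtain ⟨K, -, hK⟩ := hpG.exists_subgroup_le_card_eq hp
    (H := ⊤) (d := ∏ i, Fin.tail m i) (by rw [Subgroup.card_top, hcard]; exact dvd_mul_left _ _)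
  obtain ⟨A, hA, hAcard⟩ := exists_isTailDisjointFactorization hp hpG K (Fin.tail m)
    (fun i => hm _) hK
  have hGK : Nat.card G = m 0 * Nat.card K := by rw [hcard, hK]; rfl
  have hKtop : K < ⊤ := lt_top_iff_ne_top.mpr fun h => by
    rw [h, Subgroup.card_top] at hGK
    exact (hm 0).ne' (Nat.eq_of_mul_eq_mul_right Nat.card_pos (hGK.symm.trans (one_mul _).symm))
  have := hpG.isNilpotent
  obtain ⟨v, hvN, hvK⟩ := SetLike.exists_of_lt (Group.normalizerCondition_of_isNilpotent K hKtop)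
  have hA0 : (A 0).ncard < Nat.card K := by
    rw [hAcard, hK, Fin.prod_univ_succ]
    exact lt_mul_right (Nat.zero_lt_of_lt (hm _))
      ((Finset.one_lt_prod_iff_of_one_le fun i _ => (hm _).le).mpr ⟨0, Finset.mem_univ _, hm _⟩)
  obtain ⟨T, hT, hcf⟩ := hA.exists_isCompleteFactorization hvN hvK hA0
  refine ⟨twistCons T v A, hcf, Fin.cases ?_ fun i => ?_⟩
  · rw [ncard_twistCons_zero]
    exact Nat.eq_of_mul_eq_mul_right Nat.card_pos (hT.trans hGK)
  · rw [ncard_twistCons_succ, hAcard]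
    rfl
end
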